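/- arXiv:1705.00166 — 9 statements merged into one kernel-verified Lean document; each statement's English description precedes it below -/
import Mathlib

section
/- Let h₀ > 0, T ∈ ℕ*, β ∈ [0,1], and assume U satisfies A1(β)(ii) (‖∇U(q)‖ ≤ M₁(1 + ‖q‖^β)). Then there exists a constant C ≥ 0, depending only on T, h₀ and M₁, such that for all h ∈ (0,h₀], all (q₀,p₀) ∈ ℝ^d × ℝ^d and all k ∈ {1,…,T}, writing (q_k,p_k) = Φ_h^{∘k}(q₀,p₀): ‖q_k − q₀‖ ≤ C h(‖p₀‖ + h(1 + ‖q₀‖^β)) and ‖p_k − p₀‖ ≤ C h(1 + ‖p₀‖^β + ‖q₀‖^β). -/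
open Real
noncomputable section

lemma rpow_le_one_add' {x β : ℝ} (hx : 0 ≤ x) (hβ0 : 0 ≤ β) (hβ1 : β ≤ 1) :
    x ^ β ≤ 1 + x := by
  rcases le_total x 1 with h | h
  · have := Real.rpow_le_one hx h hβ0; linarith
  · calc x ^ β ≤ x ^ (1:ℝ) := Real.rpow_le_rpow_of_exponent_le h hβ1
      _ = x := Real.rpow_one x
      _ ≤ 1 + x := by linarith

lemma rpow_add_le' {x y β : ℝ} (hx : 0 ≤ x) (hy : 0 ≤ y) (hβ0 : 0 ≤ β) (hβ1 : β ≤ 1) :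
    (x + y) ^ β ≤ x ^ β + y ^ β := by
  have h := NNReal.rpow_add_le_add_rpow x.toNNReal y.toNNReal hβ0 hβ1
  have h2 := (NNReal.coe_le_coe).2 h
  push_cast at h2
  rwa [Real.coe_toNNReal x hx, Real.coe_toNNReal y hy] at h2

lemma step_arith (h₀ M₁ h Qn Pn A A' P2 Q' P' : ℝ)
    (hh : 0 < h) (hhh₀ : h ≤ h₀) (hM₁ : 0 ≤ M₁)
    (hA0 : 0 ≤ A) (hA'0 : 0 ≤ A') (hQn : 0 ≤ Qn) (hPn : 0 ≤ Pn)
    (hP20 : 0 ≤ P2)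
    (hP2 : P2 ≤ Pn + (h/2)*A)
    (hQ' : Q' ≤ Qn + h*P2)
    (hP' : P' ≤ P2 + (h/2)*A')
    (hA : A ≤ M₁*(2+Qn)) (hA' : A' ≤ M₁*(2+Q')) :
    2 + Q' + P' ≤ ((1 + h₀ + h₀^2*M₁/2) + 1 + h₀*M₁*(1+(1 + h₀ + h₀^2*M₁/2))/2)
      * (2 + Qn + Pn) := by
  have hh₀ : 0 < h₀ := lt_of_lt_of_le hh hhh₀
  have hN : (2:ℝ) ≤ 2 + Qn + Pn := by linarith
  have hAN : A ≤ M₁ * (2 + Qn + Pn) := by nlinarith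
  have t1 : h * P2 ≤ h₀ * (Pn + (h/2)*A) := by
    apply mul_le_mul hhh₀ hP2 hP20 hh₀.le
  have t2 : h₀ * ((h/2)*A) ≤ h₀ * ((h₀/2) * (M₁*(2+Qn+Pn))) := by
    apply mul_le_mul_of_nonneg_left _ hh₀.le
    apply mul_le_mul (by linarith) hAN hA0 (by linarith)
  have e1 : 2 + Q' ≤ (1 + h₀ + h₀^2*M₁/2) * (2 + Qn + Pn) := by
    have : h₀ * Pn ≤ h₀ * (2 + Qn + Pn) := by nlinarith
    nlinarith
  have hA'N : A' ≤ M₁ * ((1 + h₀ + h₀^2*M₁/2) * (2 + Qn + Pn)) := by nlinarith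
  have t3 : (h/2) * A' ≤ (h₀/2) * (M₁ * ((1 + h₀ + h₀^2*M₁/2) * (2 + Qn + Pn))) := by
    apply mul_le_mul (by linarith) hA'N hA'0 (by linarith)
  have t4 : (h/2) * A ≤ (h₀/2) * (M₁ * (2 + Qn + Pn)) := by
    apply mul_le_mul (by linarith) hAN hA0 (by linarith)
  nlinarith

/-- One leapfrog (Störmer–Verlet) step for the potential `U` with step size `h`. -/
def leapfrog {d : ℕ} (U : EuclideanSpace ℝ (Fin d) → ℝ) (h : ℝ)
    (x : EuclideanSpace ℝ (Fin d) × EuclideanSpace ℝ (Fin d)) :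
    EuclideanSpace ℝ (Fin d) × EuclideanSpace ℝ (Fin d) :=
  let p2 := x.2 - (h / 2) • gradient U x.1
  let q' := x.1 + h • p2
  (q', p2 - (h / 2) • gradient U q')

set_option maxHeartbeats 2000000 in
/-- under A1(β)(ii) (growth condition `‖∇U(q)‖ ≤ M₁(1 + ‖q‖^β)`), the
leapfrog iterates stay close to the initial condition, with a constant depending only
on `T`, `h₀` and `M₁`. -/
theorem leapfrog_iterates_bound
    (h₀ : ℝ) (hh₀ : 0 < h₀) (T : ℕ) (hT : 1 ≤ T) (M₁ : ℝ) (hM₁ : 0 ≤ M₁) :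
    ∃ C : ℝ, 0 ≤ C ∧
      ∀ (d : ℕ) (U : EuclideanSpace ℝ (Fin d) → ℝ) (β : ℝ),
        β ∈ Set.Icc (0 : ℝ) 1 →
        ContDiff ℝ 1 U →
        (∀ q : EuclideanSpace ℝ (Fin d), ‖gradient U q‖ ≤ M₁ * (1 + ‖q‖ ^ β)) →
        ∀ h ∈ Set.Ioc (0 : ℝ) h₀,
        ∀ q₀ p₀ : EuclideanSpace ℝ (Fin d),
        ∀ k ∈ Set.Icc 1 T,
        ‖((leapfrog U h)^[k] (q₀, p₀)).1 - q₀‖ ≤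
            C * h * (‖p₀‖ + h * (1 + ‖q₀‖ ^ β)) ∧
        ‖((leapfrog U h)^[k] (q₀, p₀)).2 - p₀‖ ≤
            C * h * (1 + ‖p₀‖ ^ β + ‖q₀‖ ^ β) := by
  classical
  set lam : ℝ := (1 + h₀ + h₀^2*M₁/2) + 1 + h₀*M₁*(1+(1 + h₀ + h₀^2*M₁/2))/2 with hlam_def
  clear_value lam
  have hlam1 : (1:ℝ) ≤ lam := by
    rw [hlam_def]
    nlinarith [mul_nonneg (sq_nonneg h₀) hM₁,
      mul_nonneg (mul_nonneg hh₀.le hM₁)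
        (by nlinarith [mul_nonneg (sq_nonneg h₀) hM₁] : (0:ℝ) ≤ 1+(1 + h₀ + h₀^2*M₁/2))]
  have hlamT1 : (1:ℝ) ≤ lam^T := one_le_pow₀ hlam1
  set K : ℝ := M₁ * (1 + 3 * lam^T) with hK_def
  clear_value K
  have hK0 : 0 ≤ K := by rw [hK_def]; exact mul_nonneg hM₁ (by linarith only [hlamT1])
  set C : ℝ := (T:ℝ)*K + T + ((T:ℝ)^2+T)*K*(2+h₀) + 1 with hC_def
  clear_value C
  have hT0 : (0:ℝ) ≤ T := Nat.cast_nonneg T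
  have hC0 : 0 ≤ C := by
    rw [hC_def]
    nlinarith [mul_nonneg hT0 hK0, mul_nonneg (mul_nonneg (by nlinarith [sq_nonneg (T:ℝ)] : (0:ℝ) ≤ (T:ℝ)^2+T) hK0) (by linarith : (0:ℝ) ≤ 2+h₀)]
  refine ⟨C, hC0, ?_⟩
  intro d U β hβ _hU hgrad h hhmem q₀ p₀ k hkmem
  obtain ⟨hβ0, hβ1⟩ := hβ
  obtain ⟨hh, hhh₀⟩ := hhmem
  obtain ⟨hk1, hkT⟩ := hkmem
  set x : ℕ → EuclideanSpace ℝ (Fin d) × EuclideanSpace ℝ (Fin d) :=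
    fun n => (leapfrog U h)^[n] (q₀, p₀) with hx_def
  have hx0 : x 0 = (q₀, p₀) := rfl
  have hstep : ∀ n, x (n+1) = leapfrog U h (x n) := by
    intro n; rw [hx_def]; exact Function.iterate_succ_apply' _ _ _
  have hq : ∀ n, (x (n+1)).1 = (x n).1 + h • ((x n).2 - (h/2) • gradient U (x n).1) := by
    intro n; rw [hstep n]; rfl
  have hp : ∀ n, (x (n+1)).2 =
      ((x n).2 - (h/2) • gradient U (x n).1) - (h/2) • gradient U ((x (n+1)).1) := by
    intro n; rw [hstep n]; rfl
  have hxk : ((leapfrog U h)^[k] (q₀, p₀)) = x k := rfl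
  clear_value x
  have hh2 : (0:ℝ) ≤ h/2 := by linarith
  have glin : ∀ z : EuclideanSpace ℝ (Fin d), ‖gradient U z‖ ≤ M₁ * (2 + ‖z‖) := by
    intro z
    have h1 := hgrad z
    have h2 := rpow_le_one_add' (norm_nonneg z) hβ0 hβ1
    nlinarith [norm_nonneg z]
  -- crude geometric bound on the whole orbit
  have crude : ∀ n, 2 + ‖(x n).1‖ + ‖(x n).2‖ ≤ lam^n * (2 + ‖q₀‖ + ‖p₀‖) := by
    intro n
    induction n with
    | zero => simp [hx0]
    | succ n ih =>
      have hP2 : ‖(x n).2 - (h/2) • gradient U (x n).1‖ ≤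
          ‖(x n).2‖ + (h/2) * ‖gradient U (x n).1‖ := by
        refine (norm_sub_le _ _).trans ?_
        rw [norm_smul, Real.norm_eq_abs, abs_of_nonneg hh2]
      have hQ' : ‖(x (n+1)).1‖ ≤ ‖(x n).1‖ + h * ‖(x n).2 - (h/2) • gradient U (x n).1‖ := by
        rw [hq n]
        refine (norm_add_le _ _).trans ?_
        rw [norm_smul, Real.norm_eq_abs, abs_of_pos hh]
      have hP' : ‖(x (n+1)).2‖ ≤ ‖(x n).2 - (h/2) • gradient U (x n).1‖
          + (h/2) * ‖gradient U ((x (n+1)).1)‖ := by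
        rw [hp n]
        refine (norm_sub_le _ _).trans ?_
        rw [norm_smul, Real.norm_eq_abs, abs_of_nonneg hh2]
      have key := step_arith h₀ M₁ h ‖(x n).1‖ ‖(x n).2‖ ‖gradient U (x n).1‖
        ‖gradient U ((x (n+1)).1)‖ ‖(x n).2 - (h/2) • gradient U (x n).1‖
        ‖(x (n+1)).1‖ ‖(x (n+1)).2‖ hh hhh₀ hM₁ (norm_nonneg _) (norm_nonneg _)
        (norm_nonneg _) (norm_nonneg _) (norm_nonneg _) hP2 hQ' hP' (glin _) (glin _)
      have key' : 2 + ‖(x (n+1)).1‖ + ‖(x (n+1)).2‖ ≤ lam * (2 + ‖(x n).1‖ + ‖(x n).2‖) := by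
        rw [hlam_def]; exact key
      calc 2 + ‖(x (n+1)).1‖ + ‖(x (n+1)).2‖
          ≤ lam * (2 + ‖(x n).1‖ + ‖(x n).2‖) := key'
        _ ≤ lam * (lam^n * (2 + ‖q₀‖ + ‖p₀‖)) :=
            mul_le_mul_of_nonneg_left ih (by linarith)
        _ = lam^(n+1) * (2 + ‖q₀‖ + ‖p₀‖) := by ring
  have qcrude : ∀ n, n ≤ T → ‖(x n).1‖ ≤ lam^T * (2 + ‖q₀‖ + ‖p₀‖) := by
    intro n hn
    have h1 := crude n
    have h2 : lam^n ≤ lam^T := pow_le_pow_right₀ hlam1 hn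
    have h3 : (0:ℝ) ≤ 2 + ‖q₀‖ + ‖p₀‖ := by positivity
    nlinarith [norm_nonneg (x n).2]
  set E : ℝ := 1 + ‖p₀‖^β + ‖q₀‖^β with hE_def
  clear_value E
  have hPb0 : (0:ℝ) ≤ ‖p₀‖^β := Real.rpow_nonneg (norm_nonneg _) β
  have hQb0 : (0:ℝ) ≤ ‖q₀‖^β := Real.rpow_nonneg (norm_nonneg _) β
  have hE1 : (1:ℝ) ≤ E := by rw [hE_def]; linarith only [hPb0, hQb0]
  have hE0 : (0:ℝ) ≤ E := by linarith only [hE1]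
  have hlamT0 : (0:ℝ) ≤ lam^T := by linarith only [hlamT1]
  -- gradient bound along the orbit
  have gbd : ∀ n, n ≤ T → ‖gradient U ((x n).1)‖ ≤ K * E := by
    intro n hn
    have h1 : ‖(x n).1‖^β ≤ (lam^T * (2 + ‖q₀‖ + ‖p₀‖))^β :=
      Real.rpow_le_rpow (norm_nonneg _) (qcrude n hn) hβ0
    have h2 : (lam^T * (2 + ‖q₀‖ + ‖p₀‖))^β = (lam^T)^β * (2 + ‖q₀‖ + ‖p₀‖)^β :=
      Real.mul_rpow hlamT0 (by positivity)
    have h3 : (lam^T)^β ≤ lam^T := by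
      calc (lam^T)^β ≤ (lam^T)^(1:ℝ) := Real.rpow_le_rpow_of_exponent_le hlamT1 hβ1
        _ = lam^T := Real.rpow_one _
    have h4 : (2 + ‖q₀‖ + ‖p₀‖)^β ≤ 3 * E := by
      have a1 : (2 + ‖q₀‖ + ‖p₀‖)^β ≤ (2 + ‖q₀‖)^β + ‖p₀‖^β :=
        rpow_add_le' (by positivity) (norm_nonneg _) hβ0 hβ1
      have a2 : (2 + ‖q₀‖)^β ≤ (2:ℝ)^β + ‖q₀‖^β :=
        rpow_add_le' (by norm_num) (norm_nonneg _) hβ0 hβ1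
      have a3 : (2:ℝ)^β ≤ 3 := by
        have a4 := rpow_le_one_add' (by norm_num : (0:ℝ) ≤ 2) hβ0 hβ1
        linarith only [a4]
      rw [hE_def]; linarith only [a1, a2, a3, hPb0, hQb0]
    have c1 : ‖(x n).1‖^β ≤ lam^T * (3 * E) := by
      calc ‖(x n).1‖^β ≤ (lam^T)^β * (2 + ‖q₀‖ + ‖p₀‖)^β := by rw [← h2]; exact h1
        _ ≤ lam^T * (3 * E) :=
            mul_le_mul h3 h4 (Real.rpow_nonneg (by positivity) β) hlamT0
    have h5 := hgrad (x n).1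
    have c2 : M₁ * (1 + ‖(x n).1‖^β) ≤ M₁ * (1 + lam^T * (3 * E)) :=
      mul_le_mul_of_nonneg_left (by linarith only [c1]) hM₁
    have c3 : M₁ * (1 + lam^T * (3 * E)) ≤ K * E := by
      rw [hK_def]
      nlinarith only [mul_nonneg hM₁ (by linarith only [hE1] : (0:ℝ) ≤ E - 1),
        mul_nonneg (mul_nonneg hM₁ hlamT0) (by linarith only [hE1] : (0:ℝ) ≤ E - 1)]
    linarith only [h5, c2, c3]
  have hKE0 : (0:ℝ) ≤ K * E := mul_nonneg hK0 hE0
  -- momentum increments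
  have pbd : ∀ n, n ≤ T → ‖(x n).2 - p₀‖ ≤ (n:ℝ) * h * (K * E) := by
    intro n
    induction n with
    | zero => intro _; simp [hx0]
    | succ n ih =>
      intro hn
      have hn' : n ≤ T := Nat.le_of_succ_le hn
      have step : ‖(x (n+1)).2 - (x n).2‖ ≤ h * (K * E) := by
        have e : (x (n+1)).2 - (x n).2
            = -((h/2) • gradient U (x n).1 + (h/2) • gradient U ((x (n+1)).1)) := by
          rw [hp n]; abel
        rw [e, norm_neg]
        refine (norm_add_le _ _).trans ?_
        rw [norm_smul, norm_smul, Real.norm_eq_abs, abs_of_nonneg hh2]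
        have g1 := mul_le_mul_of_nonneg_left (gbd n hn') hh2
        have g2 := mul_le_mul_of_nonneg_left (gbd (n+1) hn) hh2
        linarith only [g1, g2]
      have tri : ‖(x (n+1)).2 - p₀‖ ≤ ‖(x (n+1)).2 - (x n).2‖ + ‖(x n).2 - p₀‖ := by
        have tt := dist_triangle ((x (n+1)).2) ((x n).2) p₀
        simpa [dist_eq_norm] using tt
      have ihn := ih hn'
      push_cast
      push_cast at ihn
      linarith only [tri, step, ihn]
  -- position increments
  set X : ℝ := ‖p₀‖ + (T:ℝ)*h*(K*E) + (h/2)*(K*E) with hX_def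
  clear_value X
  have hX0 : (0:ℝ) ≤ X := by
    rw [hX_def]
    linarith only [norm_nonneg p₀, mul_nonneg (mul_nonneg hT0 hh.le) hKE0,
      mul_nonneg hh2 hKE0]
  have qbd : ∀ n, n ≤ T → ‖(x n).1 - q₀‖ ≤ (n:ℝ) * h * X := by
    intro n
    induction n with
    | zero => intro _; simp [hx0]
    | succ n ih =>
      intro hn
      have hn' : n ≤ T := Nat.le_of_succ_le hn
      have hpn : ‖(x n).2‖ ≤ ‖p₀‖ + (T:ℝ)*h*(K*E) := by
        have t1 : ‖(x n).2‖ ≤ ‖p₀‖ + ‖(x n).2 - p₀‖ := by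
          have tt := norm_add_le p₀ ((x n).2 - p₀); simpa using tt
        have t2 := pbd n hn'
        have t3 : (n:ℝ) * h * (K*E) ≤ (T:ℝ) * h * (K*E) :=
          mul_le_mul_of_nonneg_right
            (mul_le_mul_of_nonneg_right (Nat.cast_le.2 hn') hh.le) hKE0
        linarith only [t1, t2, t3]
      have step : ‖(x (n+1)).1 - (x n).1‖ ≤ h * X := by
        have e : (x (n+1)).1 - (x n).1 = h • ((x n).2 - (h/2) • gradient U (x n).1) := by
          rw [hq n]; abel
        rw [e, norm_smul, Real.norm_eq_abs, abs_of_pos hh]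
        have hP2 : ‖(x n).2 - (h/2) • gradient U (x n).1‖ ≤
            ‖(x n).2‖ + (h/2) * ‖gradient U (x n).1‖ := by
          refine (norm_sub_le _ _).trans ?_
          rw [norm_smul, Real.norm_eq_abs, abs_of_nonneg hh2]
        have g1 := mul_le_mul_of_nonneg_left (gbd n hn') hh2
        have hb : ‖(x n).2 - (h/2) • gradient U (x n).1‖ ≤ X := by
          rw [hX_def]
          linarith only [hP2, hpn, g1]
        exact mul_le_mul_of_nonneg_left hb hh.le
      have tri : ‖(x (n+1)).1 - q₀‖ ≤ ‖(x (n+1)).1 - (x n).1‖ + ‖(x n).1 - q₀‖ := by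
        have tt := dist_triangle ((x (n+1)).1) ((x n).1) q₀
        simpa [dist_eq_norm] using tt
      have ihn := ih hn'
      push_cast
      push_cast at ihn
      linarith only [tri, step, ihn]
  -- final assembly
  have hkR : (k:ℝ) ≤ (T:ℝ) := Nat.cast_le.2 hkT
  have hE2 : E ≤ 2*(1 + ‖q₀‖^β) + ‖p₀‖ := by
    have t1 := rpow_le_one_add' (norm_nonneg p₀) hβ0 hβ1
    rw [hE_def]; linarith only [t1, hQb0]
  set W : ℝ := ‖p₀‖ + h * (1 + ‖q₀‖^β) with hW_def
  clear_value W
  have hD0 : (0:ℝ) ≤ 1 + ‖q₀‖^β := by linarith only [hQb0]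
  have hW0 : (0:ℝ) ≤ W := by
    rw [hW_def]
    linarith only [norm_nonneg p₀, mul_nonneg hh.le hD0]
  have hPW : ‖p₀‖ ≤ W := by
    rw [hW_def]; linarith only [mul_nonneg hh.le hD0]
  have hEW : h * E ≤ (2 + h₀) * W := by
    rw [hW_def]
    have f1 : h * E ≤ h * (2*(1 + ‖q₀‖^β) + ‖p₀‖) := mul_le_mul_of_nonneg_left hE2 hh.le
    have f2 : h * ‖p₀‖ ≤ h₀ * ‖p₀‖ := mul_le_mul_of_nonneg_right hhh₀ (norm_nonneg p₀)
    have f3 : (0:ℝ) ≤ h₀ * (h * (1 + ‖q₀‖^β)) :=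
      mul_nonneg hh₀.le (mul_nonneg hh.le hD0)
    linarith only [f1, f2, f3, norm_nonneg p₀]
  rw [hxk]
  constructor
  · -- position bound
    have s0 := qbd k hkT
    have s1 : (k:ℝ) * h * X ≤ (T:ℝ) * h * X :=
      mul_le_mul_of_nonneg_right (mul_le_mul_of_nonneg_right hkR hh.le) hX0
    have hTK0 : (0:ℝ) ≤ ((T:ℝ) + 1/2) * K := mul_nonneg (by linarith only [hT0]) hK0
    have u2 : ((T:ℝ)+1/2)*K*(h*E) ≤ ((T:ℝ)+1/2)*K*((2+h₀)*W) :=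
      mul_le_mul_of_nonneg_left hEW hTK0
    have s2 : X ≤ W * (1 + ((T:ℝ) + 1/2) * K * (2 + h₀)) := by
      rw [hX_def]
      linarith only [hPW, u2]
    have s3 : (T:ℝ) * (1 + ((T:ℝ) + 1/2) * K * (2 + h₀)) ≤ C := by
      rw [hC_def]
      linarith only [mul_nonneg hT0 hK0,
        mul_nonneg (mul_nonneg hT0 hK0) (by linarith only [hh₀.le] : (0:ℝ) ≤ 2 + h₀)]
    calc ‖(x k).1 - q₀‖ ≤ (k:ℝ) * h * X := s0
      _ ≤ (T:ℝ) * h * X := s1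
      _ ≤ (T:ℝ) * h * (W * (1 + ((T:ℝ) + 1/2) * K * (2 + h₀))) :=
          mul_le_mul_of_nonneg_left s2 (mul_nonneg hT0 hh.le)
      _ = ((T:ℝ) * (1 + ((T:ℝ) + 1/2) * K * (2 + h₀))) * (h * W) := by ring
      _ ≤ C * (h * W) := mul_le_mul_of_nonneg_right s3 (mul_nonneg hh.le hW0)
      _ = C * h * W := by ring
  · -- momentum bound
    have s0 := pbd k hkT
    have s1 : (k:ℝ) * h * (K * E) ≤ (T:ℝ) * h * (K * E) :=
      mul_le_mul_of_nonneg_right (mul_le_mul_of_nonneg_right hkR hh.le) hKE0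
    have s3 : (T:ℝ) * K ≤ C := by
      rw [hC_def]
      have f1 : (0:ℝ) ≤ ((T:ℝ)^2 + T) * K * (2 + h₀) :=
        mul_nonneg (mul_nonneg (by positivity) hK0) (by linarith only [hh₀.le])
      linarith only [f1, hT0]
    calc ‖(x k).2 - p₀‖ ≤ (k:ℝ) * h * (K * E) := s0
      _ ≤ (T:ℝ) * h * (K * E) := s1
      _ = ((T:ℝ) * K) * (h * E) := by ring
      _ ≤ C * (h * E) := mul_le_mul_of_nonneg_right s3 (mul_nonneg hh.le hE0)
      _ = C * h * E := by ring
end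
end

section
/- Assume U : ℝ^d → ℝ is twice continuously differentiable with sup_{x∈ℝ^d} ‖∇²U(x)‖ ≤ L₁ < ∞. Then for every T ∈ ℕ* there exists h₀ > 0 (depending only on T and L₁) such that for all h ∈ (0,h₀) and all q ∈ ℝ^d, the map p ↦ Φ_h^{∘T,q}(q,p) is a continuously differentiable diffeomorphism from ℝ^d onto ℝ^d. -/
/-! After `T` steps of size `h`, the position reached from `(q, p)` is `T h • p + R p`, and
comparing two trajectories step by step (the force `∇U` is `L₁`-Lipschitz) shows that `R` is
`(T h / 4)`-Lipschitz as soon as `16 T² h² L₁ ≤ 1`. A map that differs from the invertible linear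
map `T h • id` by a Lipschitz map of smaller constant is a homeomorphism whose derivative is
everywhere invertible, so its inverse is `C¹` by the inverse function theorem. -/

open Real
noncomputable section

open Set Function
open scoped NNReal

theorem isUnit_of_norm_sub_smul_one_lt {𝕜 E : Type*} [NontriviallyNormedField 𝕜]
    [NormedAddCommGroup E] [NormedSpace 𝕜 E] [CompleteSpace E] {A : E →L[𝕜] E} {s : 𝕜}
    (h : ‖A - s • 1‖ < ‖s‖) : IsUnit A := by
  have hs : s ≠ 0 := norm_pos_iff.mp ((norm_nonneg _).trans_lt h)
  have hunit : IsUnit (s⁻¹ • A) := by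
    by_contra hA
    refine nonunits.subset_compl_ball hA (mem_ball_iff_norm'.mpr ?_)
    have : 1 - s⁻¹ • A = -(s⁻¹ • (A - s • 1)) := by
      rw [smul_sub, smul_smul, inv_mul_cancel₀ hs, one_smul]; abel
    rw [this, norm_neg, norm_smul, norm_inv, inv_mul_lt_iff₀ (norm_pos_iff.mpr hs), mul_one]
    exact h
  simpa [smul_smul, mul_inv_cancel₀ hs] using hunit.smul (Units.mk0 s hs)

theorem exists_contDiff_inverse_of_lipschitzWith_sub_smul {𝕜 E : Type*}
    [NontriviallyNormedField 𝕜] [NormedAddCommGroup E] [NormedSpace 𝕜 E] [CompleteSpace E]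
    {n : WithTop ℕ∞} {f : E → E} {s : 𝕜} {c : ℝ≥0} (hn : 1 ≤ n) (hf : ContDiff 𝕜 n f)
    (hlip : LipschitzWith c (fun x => f x - s • x)) (hc : c < ‖s‖) :
    ∃ g : E → E, ContDiff 𝕜 n g ∧ LeftInverse g f ∧ RightInverse g f := by
  have hs : s ≠ 0 := norm_pos_iff.mp (c.coe_nonneg.trans_lt hc)
  set e : E ≃L[𝕜] E := ContinuousLinearEquiv.smulLeft (Units.mk0 s hs)
  have happrox : ApproximatesLinearOn f (e : E →L[𝕜] E) univ c := fun x _ y _ => by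
    have he : (e : E →L[𝕜] E) (x - y) = s • x - s • y := by simp [e, smul_sub]
    rw [he, sub_sub_sub_comm]
    exact hlip.norm_sub_le x y
  have hN : Subsingleton E ∨ c < ‖(e.symm : E →L[𝕜] E)‖₊⁻¹ := by
    rcases subsingleton_or_nontrivial E with hE | hE
    · exact .inl hE
    · have he : (e.symm : E →L[𝕜] E) = s⁻¹ • 1 := by
        ext x
        simp [e, ContinuousLinearEquiv.symm_apply_eq, smul_smul, inv_mul_cancel₀ hs]
      right
      rw [he, nnnorm_smul, nnnorm_one, mul_one, nnnorm_inv, inv_inv, ← NNReal.coe_lt_coe]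
      exact hc
  set Φ := happrox.toHomeomorph f hN
  have hderiv : ∀ x, ∃ e' : E ≃L[𝕜] E, HasFDerivAt f (e' : E →L[𝕜] E) x := by
    intro x
    have hfx : HasFDerivAt f (fderiv 𝕜 f x) x :=
      (hf.differentiable (zero_lt_one.trans_le hn).ne' x).hasFDerivAt
    have hsub : ‖fderiv 𝕜 f x - s • 1‖ ≤ c :=
      (hfx.sub ((hasFDerivAt_id x).const_smul s)).le_of_lipschitz hlip
    exact ⟨.ofUnit (isUnit_of_norm_sub_smul_one_lt (hsub.trans_lt hc)).unit, hfx⟩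
  choose e' he' using hderiv
  exact ⟨Φ.symm, Φ.contDiff_symm he' hf, Φ.left_inv, Φ.right_inv⟩

theorem norm_le_of_norm_sub_smul_le {E : Type*} [SeminormedAddCommGroup E] [NormedSpace ℝ E]
    {u v : E} {t : ℝ} (ht : 0 ≤ t) (hu : ‖u - t • v‖ ≤ t / 4 * ‖v‖) : ‖u‖ ≤ 5 / 4 * t * ‖v‖ := by
  have := norm_le_norm_sub_add u (t • v)
  rw [norm_smul, Real.norm_of_nonneg ht] at this
  linarith

theorem ContDiff.iterate {𝕜 E : Type*} [NontriviallyNormedField 𝕜] [NormedAddCommGroup E]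
    [NormedSpace 𝕜 E] {n : WithTop ℕ∞} {f : E → E} (hf : ContDiff 𝕜 n f) (k : ℕ) :
    ContDiff 𝕜 n f^[k] := by
  induction k with
  | zero => exact contDiff_id
  | succ k ih => rw [iterate_succ]; exact ih.comp hf

section Gradient

variable {F : Type*} [NormedAddCommGroup F] [InnerProductSpace ℝ F] [CompleteSpace F]
  {U : F → ℝ}

theorem ContDiff.gradient {n : WithTop ℕ∞} (hU : ContDiff ℝ (n + 1) U) :
    ContDiff ℝ n (gradient U) :=
  (InnerProductSpace.toDual ℝ F).symm.contDiff.comp (hU.fderiv_right le_rfl)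

theorem lipschitzWith_gradient_of_norm_iteratedFDeriv_two_le {L : ℝ≥0} (hU : ContDiff ℝ 2 U)
    (hb : ∀ x, ‖iteratedFDeriv ℝ 2 U x‖ ≤ L) : LipschitzWith L (gradient U) := by
  have hfderiv : LipschitzWith L (fderiv ℝ U) := by
    refine lipschitzWith_of_nnnorm_fderiv_le ((hU.fderiv_right le_rfl).differentiable one_ne_zero)
      fun x => ?_
    rw [← NNReal.coe_le_coe, coe_nnnorm, ← norm_iteratedFDeriv_one, norm_iteratedFDeriv_fderiv]
    exact hb x
  rw [← one_mul L]
  exact (InnerProductSpace.toDual ℝ F).symm.lipschitz.comp hfderiv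

end Gradient

section Leapfrog

variable {d : ℕ} {U : EuclideanSpace ℝ (Fin d) → ℝ} {h : ℝ} {L : ℝ≥0}

theorem contDiff_leapfrog {n : WithTop ℕ∞} (hU : ContDiff ℝ n (gradient U)) :
    ContDiff ℝ n (leapfrog U h) := by
  unfold leapfrog
  fun_prop

theorem norm_leapfrog_fst_sub_sub_le (hG : LipschitzWith L (gradient U))
    (z w : EuclideanSpace ℝ (Fin d) × EuclideanSpace ℝ (Fin d)) :
    ‖(leapfrog U h z).1 - (leapfrog U h w).1 - (z.1 - w.1 + h • (z.2 - w.2))‖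
      ≤ h ^ 2 / 2 * L * ‖z.1 - w.1‖ := by
  have he : (leapfrog U h z).1 - (leapfrog U h w).1 - (z.1 - w.1 + h • (z.2 - w.2))
      = -(h ^ 2 / 2) • (gradient U z.1 - gradient U w.1) := by
    simp only [leapfrog]
    module
  rw [he, norm_smul, norm_neg, Real.norm_of_nonneg (by positivity), mul_assoc]
  exact mul_le_mul_of_nonneg_left (hG.norm_sub_le _ _) (by positivity)

theorem norm_leapfrog_snd_sub_sub_le (hG : LipschitzWith L (gradient U)) (hh : 0 ≤ h)
    (z w : EuclideanSpace ℝ (Fin d) × EuclideanSpace ℝ (Fin d)) :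
    ‖(leapfrog U h z).2 - (leapfrog U h w).2 - (z.2 - w.2)‖
      ≤ h / 2 * L * (‖z.1 - w.1‖ + ‖(leapfrog U h z).1 - (leapfrog U h w).1‖) := by
  have he : (leapfrog U h z).2 - (leapfrog U h w).2 - (z.2 - w.2)
      = -(h / 2) • ((gradient U z.1 - gradient U w.1)
        + (gradient U (leapfrog U h z).1 - gradient U (leapfrog U h w).1)) := by
    simp only [leapfrog]
    module
  rw [he, norm_smul, norm_neg, Real.norm_of_nonneg (by positivity), mul_assoc, mul_add]
  exact mul_le_mul_of_nonneg_left ((norm_add_le _ _).trans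
    (add_le_add (hG.norm_sub_le _ _) (hG.norm_sub_le _ _))) (by positivity)

section Deviation

variable (hG : LipschitzWith L (gradient U)) (hh : 0 ≤ h) {k T : ℝ} (hk : 0 ≤ k)
  (hkT : k + 1 ≤ T) (hsmall : 16 * T ^ 2 * h ^ 2 * L ≤ 1)
  {z w : EuclideanSpace ℝ (Fin d) × EuclideanSpace ℝ (Fin d)} {v : EuclideanSpace ℝ (Fin d)}
include hG hh hk hkT hsmall

theorem leapfrog_fst_deviation_succ_le (hq : ‖z.1 - w.1 - (k * h) • v‖ ≤ k * h / 4 * ‖v‖)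
    (hp : ‖z.2 - w.2 - v‖ ≤ 2 * k * T * h ^ 2 * L * ‖v‖) :
    ‖(leapfrog U h z).1 - (leapfrog U h w).1 - ((k + 1) * h) • v‖ ≤ (k + 1) * h / 4 * ‖v‖ := by
  have hkTL : k * T * h ^ 2 * L ≤ 1 / 16 := by
    nlinarith [mul_le_mul_of_nonneg_right (by nlinarith : k * T ≤ T ^ 2)
      (by positivity : 0 ≤ h ^ 2 * L)]
  have hkL : k * h ^ 2 * L ≤ 1 / 16 := by
    nlinarith [mul_le_mul_of_nonneg_right (by nlinarith : k ≤ k * T)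
      (by positivity : 0 ≤ h ^ 2 * L)]
  have hsplit : (leapfrog U h z).1 - (leapfrog U h w).1 - ((k + 1) * h) • v
      = ((leapfrog U h z).1 - (leapfrog U h w).1 - (z.1 - w.1 + h • (z.2 - w.2)))
        + (z.1 - w.1 - (k * h) • v) + h • (z.2 - w.2 - v) := by
    module
  have hstep := (norm_leapfrog_fst_sub_sub_le (h := h) hG z w).trans
    (mul_le_mul_of_nonneg_left (norm_le_of_norm_sub_smul_le (by positivity) hq)
      (by positivity : 0 ≤ h ^ 2 / 2 * L))
  have hph : ‖h • (z.2 - w.2 - v)‖ ≤ h * (2 * k * T * h ^ 2 * L * ‖v‖) := by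
    rw [norm_smul, Real.norm_of_nonneg hh]
    exact mul_le_mul_of_nonneg_left hp hh
  have hv : 0 ≤ h * ‖v‖ := by positivity
  rw [hsplit]
  refine norm_add₃_le.trans ?_
  nlinarith [mul_le_mul_of_nonneg_right hkL hv, mul_le_mul_of_nonneg_right hkTL hv]

theorem leapfrog_snd_deviation_succ_le (hq : ‖z.1 - w.1 - (k * h) • v‖ ≤ k * h / 4 * ‖v‖)
    (hp : ‖z.2 - w.2 - v‖ ≤ 2 * k * T * h ^ 2 * L * ‖v‖) :
    ‖(leapfrog U h z).2 - (leapfrog U h w).2 - v‖ ≤ 2 * (k + 1) * T * h ^ 2 * L * ‖v‖ := by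
  have hq' := norm_le_of_norm_sub_smul_le (by positivity)
    (leapfrog_fst_deviation_succ_le hG hh hk hkT hsmall hq hp)
  have hq := norm_le_of_norm_sub_smul_le (by positivity) hq
  have hX : 0 ≤ h ^ 2 * L * ‖v‖ := by positivity
  calc ‖(leapfrog U h z).2 - (leapfrog U h w).2 - v‖
      ≤ ‖(leapfrog U h z).2 - (leapfrog U h w).2 - (z.2 - w.2)‖ + ‖z.2 - w.2 - v‖ := by
        simpa using norm_add_le ((leapfrog U h z).2 - (leapfrog U h w).2 - (z.2 - w.2))
          (z.2 - w.2 - v)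
    _ ≤ h / 2 * L * (5 / 4 * (k * h) * ‖v‖ + 5 / 4 * ((k + 1) * h) * ‖v‖)
        + 2 * k * T * h ^ 2 * L * ‖v‖ := by
        gcongr
        exact (norm_leapfrog_snd_sub_sub_le hG hh z w).trans (by gcongr)
    _ ≤ 2 * (k + 1) * T * h ^ 2 * L * ‖v‖ := by
        nlinarith [mul_le_mul_of_nonneg_right hkT hX]

end Deviation

theorem leapfrog_iterate_deviation_le (hG : LipschitzWith L (gradient U)) (hh : 0 ≤ h) {T : ℕ}
    (hsmall : 16 * T ^ 2 * h ^ 2 * L ≤ 1) (q x y : EuclideanSpace ℝ (Fin d)) :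
    ∀ k ≤ T,
      ‖((leapfrog U h)^[k] (q, x)).1 - ((leapfrog U h)^[k] (q, y)).1 - (k * h) • (x - y)‖
          ≤ k * h / 4 * ‖x - y‖ ∧
        ‖((leapfrog U h)^[k] (q, x)).2 - ((leapfrog U h)^[k] (q, y)).2 - (x - y)‖
          ≤ 2 * k * T * h ^ 2 * L * ‖x - y‖ := by
  intro k
  induction k with
  | zero => intro _; simp
  | succ k ih =>
    intro hk
    obtain ⟨hq, hp⟩ := ih (by omega)
    have hkT : (k : ℝ) + 1 ≤ T := by exact_mod_cast hk
    rw [iterate_succ_apply', iterate_succ_apply', Nat.cast_succ]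
    exact ⟨leapfrog_fst_deviation_succ_le hG hh k.cast_nonneg hkT hsmall hq hp,
      leapfrog_snd_deviation_succ_le hG hh k.cast_nonneg hkT hsmall hq hp⟩

theorem lipschitzWith_leapfrog_iterate_fst_sub_smul (hG : LipschitzWith L (gradient U))
    (hh : 0 ≤ h) {T : ℕ} (hsmall : 16 * T ^ 2 * h ^ 2 * L ≤ 1) (q : EuclideanSpace ℝ (Fin d)) :
    LipschitzWith (T * h / 4).toNNReal
      (fun p => ((leapfrog U h)^[T] (q, p)).1 - (T * h) • p) :=
  LipschitzWith.of_dist_le' fun x y => by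
    rw [dist_eq_norm, dist_eq_norm, sub_sub_sub_comm, ← smul_sub]
    exact (leapfrog_iterate_deviation_le hG hh hsmall q x y T le_rfl).1

end Leapfrog

/-- if `U` is C² with uniformly bounded Hessian, then for small enough
step sizes `h` the map `p ↦ Φ_h^{∘T,q}(q,p)` is a C¹ diffeomorphism of `ℝ^d`,
with threshold `h₀` depending only on `T` and `L₁`. -/
theorem leapfrog_position_map_diffeomorphism (T : ℕ) (hT : 1 ≤ T) (L₁ : ℝ) (hL₁ : 0 ≤ L₁) :
    ∃ h₀ > (0 : ℝ),
      ∀ (d : ℕ) (U : EuclideanSpace ℝ (Fin d) → ℝ),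
        ContDiff ℝ 2 U →
        (∀ x : EuclideanSpace ℝ (Fin d), ‖iteratedFDeriv ℝ 2 U x‖ ≤ L₁) →
        ∀ h ∈ Set.Ioo (0 : ℝ) h₀, ∀ q : EuclideanSpace ℝ (Fin d),
          ∃ g : EuclideanSpace ℝ (Fin d) → EuclideanSpace ℝ (Fin d),
            ContDiff ℝ 1 (fun p : EuclideanSpace ℝ (Fin d) =>
              ((leapfrog U h)^[T] (q, p)).1) ∧
            ContDiff ℝ 1 g ∧
            Function.LeftInverse g (fun p : EuclideanSpace ℝ (Fin d) =>
              ((leapfrog U h)^[T] (q, p)).1) ∧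
            Function.RightInverse g (fun p : EuclideanSpace ℝ (Fin d) =>
              ((leapfrog U h)^[T] (q, p)).1) := by
  have hT0 : (0 : ℝ) < T := by exact_mod_cast hT
  refine ⟨1 / (4 * T * (L₁ + 1)), by positivity, ?_⟩
  rintro d U hU hb h ⟨hh0, hh⟩ q
  have hsmall : 16 * (T : ℝ) ^ 2 * h ^ 2 * L₁ ≤ 1 := by
    rw [lt_div_iff₀ (by positivity)] at hh
    nlinarith [mul_pos (mul_pos hT0 hh0) (by linarith : 0 < L₁ + 1)]
  have hG := lipschitzWith_gradient_of_norm_iteratedFDeriv_two_le (L := ⟨L₁, hL₁⟩) hU hb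
  have hF : ContDiff ℝ 1 (fun p => ((leapfrog U h)^[T] (q, p)).1) :=
    contDiff_fst.comp (((contDiff_leapfrog (hU.gradient (n := 1))).iterate T).comp
      (contDiff_const.prodMk contDiff_id))
  have hc : ((T * h / 4).toNNReal : ℝ) < ‖(T : ℝ) * h‖ := by
    rw [Real.coe_toNNReal _ (by positivity), Real.norm_of_nonneg (by positivity)]
    linarith [mul_pos hT0 hh0]
  obtain ⟨g, hg, hleft, hright⟩ := exists_contDiff_inverse_of_lipschitzWith_sub_smul le_rfl hF
    (lipschitzWith_leapfrog_iterate_fst_sub_smul hG hh0.le hsmall q) hc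
  exact ⟨g, hF, hg, hleft, hright⟩
end
end

section
/- Let β ∈ [0,1] and assume U satisfies A1(β) and is twice continuously differentiable. Let T ∈ ℕ* and let h̃_T > 0 be as in the irreducibility theorem for the HMC kernel. Then for all h ∈ (0,h̃_T] and every compact set B ⊂ ℝ^d, there exists ε > 0 such that for all q ∈ B and all Borel sets A ⊆ B: P_{h,T}(q,A) ≥ ε Leb(A); that is, every compact set is a small set for the HMC kernel. -/
open Real MeasureTheory Filter
noncomputable section

/-- The Hamiltonian `H(q,p) = U(q) + ‖p‖²/2`. -/
def hamiltonian {d : ℕ} (U : EuclideanSpace ℝ (Fin d) → ℝ)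
    (x : EuclideanSpace ℝ (Fin d) × EuclideanSpace ℝ (Fin d)) : ℝ :=
  U x.1 + ‖x.2‖ ^ 2 / 2

/-- Acceptance probability `α(x,y) = min(1, exp(H(x) − H(y)))`. -/
def hmcAccept {d : ℕ} (U : EuclideanSpace ℝ (Fin d) → ℝ)
    (x y : EuclideanSpace ℝ (Fin d) × EuclideanSpace ℝ (Fin d)) : ℝ :=
  min 1 (Real.exp (hamiltonian U x - hamiltonian U y))

/-- The HMC Markov kernel `P_{h,T}(q, ·)`, as a measure on `ℝ^d`. -/
def hmcP {d : ℕ} (U : EuclideanSpace ℝ (Fin d) → ℝ) (h : ℝ) (T : ℕ)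
    (q : EuclideanSpace ℝ (Fin d)) : Measure (EuclideanSpace ℝ (Fin d)) :=
  Measure.map (fun p => ((leapfrog U h)^[T] (q, p)).1)
    (volume.withDensity fun p => ENNReal.ofReal
      ((2 * π) ^ (-(d : ℝ) / 2) * hmcAccept U (q, p) ((leapfrog U h)^[T] (q, p)) *
        Real.exp (-‖p‖ ^ 2 / 2))) +
  ENNReal.ofReal ((2 * π) ^ (-(d : ℝ) / 2) *
      ∫ p, (1 - hmcAccept U (q, p) ((leapfrog U h)^[T] (q, p))) *
        Real.exp (-‖p‖ ^ 2 / 2)) • Measure.dirac q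

open Set Function Topology
open scoped NNReal Pointwise

/-! Because `∇U` is Lipschitz, the `T`-step position map `p ↦ Φ_h^{∘T,q}(q,p)` differs from
`p ↦ q + T h p` by a map with Lipschitz constant `O(h²)`, uniformly in `q`. Rescaled by `T h`, it
is therefore `δ`-close to the identity for small `h`: it is onto, and it enlarges Lebesgue measure
by at most `2 (T h)^d`. The momenta it sends into a compact `B` stay bounded, and on this bounded
set the continuous, positive density of accepted moves is bounded below; hence
`P_{h,T}(q, A) ≥ ε Leb(A)` for `A ⊆ B`. -/

section NearDilation

variable {E : Type*} [NormedAddCommGroup E] [NormedSpace ℝ E]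
  {f : E → E} {c : ℝ} {δ : ℝ≥0}

def ApproximatesDilation (f : E → E) (c : ℝ) (δ : ℝ≥0) : Prop :=
  ∀ x y, ‖f x - f y - c • (x - y)‖ ≤ δ * c * ‖x - y‖

theorem ApproximatesDilation.approximatesLinearOn_comp_inv_smul
    (hf : ApproximatesDilation f c δ) (hc : 0 < c) :
    ApproximatesLinearOn (fun v => f (c⁻¹ • v)) (ContinuousLinearMap.id ℝ E) univ δ := by
  intro x _ y _
  have h := hf (c⁻¹ • x) (c⁻¹ • y)
  rwa [← smul_sub, smul_inv_smul₀ hc.ne', norm_smul, Real.norm_of_nonneg (inv_nonneg.2 hc.le),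
    mul_assoc, mul_inv_cancel_left₀ hc.ne'] at h

theorem ApproximatesDilation.surjective [CompleteSpace E] (hf : ApproximatesDilation f c δ)
    (hc : 0 < c) (hδ : δ < 1) : Surjective f := by
  have hg := hf.approximatesLinearOn_comp_inv_smul hc
  have hg_surj : Surjective fun v => f (c⁻¹ • v) := by
    refine ApproximatesLinearOn.surjective (f' := ContinuousLinearEquiv.refl ℝ E) hg ?_
    rcases subsingleton_or_nontrivial E with hE | hE
    · exact Or.inl hE
    · right
      simpa using hδ
  intro y
  obtain ⟨v, hv⟩ := hg_surj y
  exact ⟨c⁻¹ • v, hv⟩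

theorem ApproximatesDilation.mul_norm_sub_le (hf : ApproximatesDilation f c δ) (hc : 0 ≤ c)
    (x y : E) :
    (1 - δ) * c * ‖x - y‖ ≤ ‖f x - f y‖ := by
  have h := norm_sub_le (f x - f y) (f x - f y - c • (x - y))
  rw [sub_sub_cancel, norm_smul, Real.norm_of_nonneg hc] at h
  linarith [hf x y]

theorem eventually_measure_image_le_of_approximatesDilation [FiniteDimensional ℝ E]
    [MeasurableSpace E] [BorelSpace E] (μ : Measure E) [μ.IsAddHaarMeasure] :
    ∀ᶠ δ : ℝ≥0 in 𝓝[>] 0, ∀ c > 0, ∀ f : E → E, ApproximatesDilation f c δ →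
      ∀ s, μ (f '' s) ≤ 2 * ENNReal.ofReal (c ^ Module.finrank ℝ E) * μ s := by
  have hdet : ENNReal.ofReal |(ContinuousLinearMap.id ℝ E).det| < (2 : ℝ≥0) := by
    simp [ContinuousLinearMap.det]
  filter_upwards [addHaar_image_le_mul_of_det_lt μ _ hdet] with δ hδ c hc f hf s
  have himage : f '' s = (fun v => f (c⁻¹ • v)) '' (c • s) := by
    rw [← image_smul, image_image]
    simp only [inv_smul_smul₀ hc.ne']
  calc μ (f '' s) ≤ 2 * μ (c • s) := by
        rw [himage]
        exact_mod_cast hδ _ _ ((hf.approximatesLinearOn_comp_inv_smul hc).mono_set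
          (subset_univ _))
    _ = 2 * ENNReal.ofReal (c ^ Module.finrank ℝ E) * μ s := by
        rw [Measure.addHaar_smul_of_nonneg μ hc.le, mul_assoc]

theorem exists_norm_le_of_approximatesDilation {X : Type*} [TopologicalSpace X] {S : Set X}
    (hS : IsCompact S) {B : Set E} (hB : Bornology.IsBounded B) {f : X → E → E}
    (hf0 : ContinuousOn (fun x => f x 0) S) (hc : 0 < c) (hδ : δ < 1)
    (hf : ∀ x ∈ S, ApproximatesDilation (f x) c δ) :
    ∃ R, ∀ x ∈ S, ∀ p, f x p ∈ B → ‖p‖ ≤ R := by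
  obtain ⟨r, hr⟩ := hB.exists_norm_le
  obtain ⟨r₀, hr₀⟩ := hS.exists_bound_of_continuousOn hf0
  have hδc : 0 < (1 - δ) * c := mul_pos (sub_pos.2 (by exact_mod_cast hδ)) hc
  refine ⟨(r + r₀) / ((1 - δ) * c), fun x hx p hp => ?_⟩
  rw [le_div_iff₀' hδc]
  calc (1 - δ) * c * ‖p‖ = (1 - δ) * c * ‖p - 0‖ := by rw [sub_zero]
    _ ≤ ‖f x p - f x 0‖ := (hf x hx).mul_norm_sub_le hc.le p 0
    _ ≤ r + r₀ := (norm_sub_le _ _).trans (add_le_add (hr _ hp) (hr₀ x hx))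

end NearDilation

section Leapfrog

variable {d : ℕ} {U : EuclideanSpace ℝ (Fin d) → ℝ} {K : ℝ≥0} {h : ℝ}

theorem continuous_leapfrog (hU : Continuous (gradient U)) : Continuous (leapfrog U h) := by
  unfold leapfrog
  fun_prop

theorem leapfrog_fst_sub (x y : EuclideanSpace ℝ (Fin d) × EuclideanSpace ℝ (Fin d)) :
    (leapfrog U h x).1 - (leapfrog U h y).1 =
      x.1 - y.1 + h • (x.2 - y.2) - (h ^ 2 / 2) • (gradient U x.1 - gradient U y.1) := by
  simp only [leapfrog]
  module

theorem leapfrog_snd_sub (x y : EuclideanSpace ℝ (Fin d) × EuclideanSpace ℝ (Fin d)) :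
    (leapfrog U h x).2 - (leapfrog U h y).2 =
      x.2 - y.2 - (h / 2) • (gradient U x.1 - gradient U y.1)
        - (h / 2) • (gradient U (leapfrog U h x).1 - gradient U (leapfrog U h y).1) := by
  simp only [leapfrog]
  module

theorem lipschitzWith_leapfrog (hU : LipschitzWith K (gradient U)) (h0 : 0 ≤ h) (h1 : h ≤ 1)
    (hK : h * K ≤ 1) : LipschitzWith 3 (leapfrog U h) := by
  refine LipschitzWith.of_dist_le_mul fun x y => ?_
  rw [Prod.dist_eq, Prod.dist_eq]
  simp only [dist_eq_norm, NNReal.coe_ofNat]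
  set m := max ‖x.1 - y.1‖ ‖x.2 - y.2‖
  have hq : ‖x.1 - y.1‖ ≤ m := le_max_left _ _
  have hp : ‖x.2 - y.2‖ ≤ m := le_max_right _ _
  have hm : 0 ≤ m := (norm_nonneg _).trans hq
  have hg := hU.norm_sub_le
  have hKq : ∀ v : EuclideanSpace ℝ (Fin d), h * (K * ‖v‖) ≤ ‖v‖ := fun v => by
    rw [← mul_assoc]; exact mul_le_of_le_one_left (norm_nonneg _) hK
  have hq' : ‖(leapfrog U h x).1 - (leapfrog U h y).1‖ ≤ 5 / 2 * m := by
    rw [leapfrog_fst_sub]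
    refine (norm_sub_le_of_le (norm_add_le _ _) le_rfl).trans ?_
    rw [norm_smul_of_nonneg h0, norm_smul_of_nonneg (by positivity)]
    nlinarith [mul_le_mul_of_nonneg_left (hg x.1 y.1) (by positivity : 0 ≤ h ^ 2 / 2),
      hKq (x.1 - y.1),
      mul_le_mul_of_nonneg_left hp h0]
  have hp' : ‖(leapfrog U h x).2 - (leapfrog U h y).2‖ ≤ 3 * m := by
    rw [leapfrog_snd_sub]
    refine (norm_sub_le_of_le (norm_sub_le _ _) le_rfl).trans ?_
    rw [norm_smul_of_nonneg (by positivity), norm_smul_of_nonneg (by positivity)]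
    nlinarith [mul_le_mul_of_nonneg_left (hg x.1 y.1) (by positivity : 0 ≤ h / 2),
      mul_le_mul_of_nonneg_left (hg (leapfrog U h x).1 (leapfrog U h y).1)
        (by positivity : 0 ≤ h / 2), hKq (x.1 - y.1),
        hKq ((leapfrog U h x).1 - (leapfrog U h y).1)]
  exact max_le (hq'.trans (by linarith)) hp'

theorem norm_iterate_leapfrog_fst_sub_le (hU : LipschitzWith K (gradient U)) (h0 : 0 ≤ h)
    (h1 : h ≤ 1) (hK : h * K ≤ 1) (q p p' : EuclideanSpace ℝ (Fin d)) (k : ℕ) :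
    ‖((leapfrog U h)^[k] (q, p)).1 - ((leapfrog U h)^[k] (q, p')).1‖ ≤
      3 ^ k * ‖p - p'‖ := by
  have h := ((lipschitzWith_leapfrog hU h0 h1 hK).iterate k).dist_le_mul (q, p) (q, p')
  rw [Prod.dist_eq, Prod.dist_eq, dist_self, max_eq_right dist_nonneg] at h
  simp only [dist_eq_norm, NNReal.coe_pow, NNReal.coe_ofNat] at h
  exact (le_max_left _ _).trans h

theorem norm_leapfrog_fst_sub_sub_le_s5 (hU : LipschitzWith K (gradient U)) (h0 : 0 ≤ h)
    (x y : EuclideanSpace ℝ (Fin d) × EuclideanSpace ℝ (Fin d))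
    (v : EuclideanSpace ℝ (Fin d))
    (a : ℝ) :
    ‖(leapfrog U h x).1 - (leapfrog U h y).1 - (a + h) • v‖ ≤
      ‖x.1 - y.1 - a • v‖ + h * ‖x.2 - y.2 - v‖ + h ^ 2 / 2 * (K * ‖x.1 - y.1‖) := by
  have hid : (leapfrog U h x).1 - (leapfrog U h y).1 - (a + h) • v =
      (x.1 - y.1 - a • v) + h • (x.2 - y.2 - v)
        - (h ^ 2 / 2) • (gradient U x.1 - gradient U y.1) := by
    rw [leapfrog_fst_sub]
    module
  rw [hid]
  refine (norm_sub_le_of_le (norm_add_le _ _) le_rfl).trans ?_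
  rw [norm_smul_of_nonneg h0, norm_smul_of_nonneg (by positivity)]
  gcongr
  exact hU.norm_sub_le _ _

theorem norm_leapfrog_snd_sub_sub_le_s5 (hU : LipschitzWith K (gradient U)) (h0 : 0 ≤ h)
    (x y : EuclideanSpace ℝ (Fin d) × EuclideanSpace ℝ (Fin d))
    (v : EuclideanSpace ℝ (Fin d)) :
    ‖(leapfrog U h x).2 - (leapfrog U h y).2 - v‖ ≤
      ‖x.2 - y.2 - v‖ + h / 2 * (K * ‖x.1 - y.1‖) +
        h / 2 * (K * ‖(leapfrog U h x).1 - (leapfrog U h y).1‖) := by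
  have hid : (leapfrog U h x).2 - (leapfrog U h y).2 - v =
      (x.2 - y.2 - v) - (h / 2) • (gradient U x.1 - gradient U y.1)
        - (h / 2) • (gradient U (leapfrog U h x).1 - gradient U (leapfrog U h y).1) := by
    rw [leapfrog_snd_sub]
    module
  rw [hid]
  refine (norm_sub_le_of_le (norm_sub_le _ _) le_rfl).trans ?_
  rw [norm_smul_of_nonneg (by positivity), norm_smul_of_nonneg (by positivity)]
  gcongr <;> exact hU.norm_sub_le _ _

theorem norm_iterate_leapfrog_sub_sub_le (hU : LipschitzWith K (gradient U)) (h0 : 0 ≤ h)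
    (h1 : h ≤ 1) (hK : h * K ≤ 1) (q p p' : EuclideanSpace ℝ (Fin d)) (k : ℕ) :
    ‖((leapfrog U h)^[k] (q, p)).1 - ((leapfrog U h)^[k] (q, p')).1 - (k * h) • (p - p')‖ ≤
        K * 3 ^ k * k ^ 2 * h ^ 2 * ‖p - p'‖ ∧
      ‖((leapfrog U h)^[k] (q, p)).2 - ((leapfrog U h)^[k] (q, p')).2 - (p - p')‖ ≤
        K * 3 ^ k * k * h * ‖p - p'‖ := by
  induction k with
  | zero => simp
  | succ k ih =>
    obtain ⟨hu, hw⟩ := ih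
    have hq := norm_iterate_leapfrog_fst_sub_le hU h0 h1 hK q p p' k
    have hq' := norm_iterate_leapfrog_fst_sub_le hU h0 h1 hK q p p' (k + 1)
    simp only [Function.iterate_succ_apply'] at hq' ⊢
    have hP : 0 ≤ K * 3 ^ k * h * ‖p - p'‖ := by positivity
    have hk : (0 : ℝ) ≤ k := k.cast_nonneg
    constructor
    · rw [Nat.cast_succ, add_one_mul]
      refine (norm_leapfrog_fst_sub_sub_le_s5 hU h0 _ _ _ _).trans ?_
      calc _ ≤ K * 3 ^ k * k ^ 2 * h ^ 2 * ‖p - p'‖ + h * (K * 3 ^ k * k * h * ‖p - p'‖)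
            + h ^ 2 / 2 * (K * (3 ^ k * ‖p - p'‖)) := by gcongr
        _ ≤ _ := by
          rw [pow_succ (3 : ℝ) k]
          nlinarith [mul_nonneg (mul_nonneg hP h0)
            (by positivity : (0 : ℝ) ≤ 2 * k ^ 2 + 5 * k + 5 / 2)]
    · refine (norm_leapfrog_snd_sub_sub_le_s5 hU h0 _ _ _).trans ?_
      calc _ ≤ K * 3 ^ k * k * h * ‖p - p'‖ + h / 2 * (K * (3 ^ k * ‖p - p'‖))
            + h / 2 * (K * (3 ^ (k + 1) * ‖p - p'‖)) := by gcongr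
        _ ≤ _ := by
          rw [pow_succ (3 : ℝ) k, Nat.cast_succ]
          nlinarith [mul_nonneg hP (by positivity : (0 : ℝ) ≤ 2 * k + 1)]

theorem approximatesDilation_iterate_leapfrog_fst (hU : LipschitzWith K (gradient U))
    (h0 : 0 ≤ h) (h1 : h ≤ 1) (hK : h * K ≤ 1) {k : ℕ} {δ : ℝ≥0}
    (hδ : K * 3 ^ k * k * h ≤ δ)
    (q : EuclideanSpace ℝ (Fin d)) :
    ApproximatesDilation (fun p => ((leapfrog U h)^[k] (q, p)).1) (k * h) δ := fun p p' =>
  (norm_iterate_leapfrog_sub_sub_le hU h0 h1 hK q p p' k).1.trans <| by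
    refine mul_le_mul_of_nonneg_right ?_ (norm_nonneg _)
    nlinarith [mul_le_mul_of_nonneg_right hδ (by positivity : (0 : ℝ) ≤ k * h)]

end Leapfrog

section Kernel

variable {d : ℕ} {U : EuclideanSpace ℝ (Fin d) → ℝ} {h : ℝ} {T : ℕ}

def hmcAcceptedDensity (U : EuclideanSpace ℝ (Fin d) → ℝ) (h : ℝ) (T : ℕ)
    (x : EuclideanSpace ℝ (Fin d) × EuclideanSpace ℝ (Fin d)) : ℝ :=
  (2 * π) ^ (-(d : ℝ) / 2) * hmcAccept U x ((leapfrog U h)^[T] x) * Real.exp (-‖x.2‖ ^ 2 / 2)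

theorem continuous_hmcAcceptedDensity (hU : Continuous U) (hΦ : Continuous (leapfrog U h)) :
    Continuous (hmcAcceptedDensity U h T) := by
  have hH : Continuous (hamiltonian U) := by unfold hamiltonian; fun_prop
  have hΦT := hΦ.iterate T
  unfold hmcAcceptedDensity hmcAccept
  fun_prop

theorem hmcAcceptedDensity_pos (x : EuclideanSpace ℝ (Fin d) × EuclideanSpace ℝ (Fin d)) :
    0 < hmcAcceptedDensity U h T x := by
  unfold hmcAcceptedDensity hmcAccept
  have := Real.rpow_pos_of_pos (by positivity : 0 < 2 * π) (-(d : ℝ) / 2)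
  positivity

theorem setLIntegral_hmcAcceptedDensity_le_hmcP {q : EuclideanSpace ℝ (Fin d)}
    (hF : Measurable fun p => ((leapfrog U h)^[T] (q, p)).1)
    {A : Set (EuclideanSpace ℝ (Fin d))} (hA : MeasurableSet A) :
    ∫⁻ p in (fun p => ((leapfrog U h)^[T] (q, p)).1) ⁻¹' A,
      ENNReal.ofReal (hmcAcceptedDensity U h T (q, p)) ≤ hmcP U h T q A := by
  rw [hmcP, Measure.add_apply, Measure.map_apply hF hA, withDensity_apply _ (hF hA)]
  exact le_self_add

theorem ofReal_mul_volume_le_hmcP (hΦ : Continuous (leapfrog U h))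
    {q : EuclideanSpace ℝ (Fin d)} {A : Set (EuclideanSpace ℝ (Fin d))} (hA : MeasurableSet A)
    {c m : ℝ} (hc : 0 < c) (hsurj : Surjective fun p => ((leapfrog U h)^[T] (q, p)).1)
    (hvol : ∀ s, volume ((fun p => ((leapfrog U h)^[T] (q, p)).1) '' s) ≤
      2 * ENNReal.ofReal (c ^ d) * volume s)
    (hm : ∀ p, ((leapfrog U h)^[T] (q, p)).1 ∈ A → m ≤ hmcAcceptedDensity U h T (q, p)) :
    ENNReal.ofReal (m / (2 * c ^ d)) * volume A ≤ hmcP U h T q A := by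
  set F := fun p => ((leapfrog U h)^[T] (q, p)).1
  have hF : Measurable F := ((hΦ.iterate T).fst.comp (Continuous.prodMk_right q)).measurable
  have hconst : ENNReal.ofReal (m / (2 * c ^ d)) * (2 * ENNReal.ofReal (c ^ d)) =
      ENNReal.ofReal m := by
    rw [← ENNReal.ofReal_ofNat 2, ← ENNReal.ofReal_mul zero_le_two,
      ← ENNReal.ofReal_mul' (by positivity), div_mul_cancel₀ _ (by positivity)]
  calc ENNReal.ofReal (m / (2 * c ^ d)) * volume A
      = ENNReal.ofReal (m / (2 * c ^ d)) * volume (F '' (F ⁻¹' A)) := by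
        rw [image_preimage_eq A hsurj]
    _ ≤ ENNReal.ofReal (m / (2 * c ^ d)) *
          (2 * ENNReal.ofReal (c ^ d) * volume (F ⁻¹' A)) := by
        gcongr
        exact hvol _
    _ = ∫⁻ _ in F ⁻¹' A, ENNReal.ofReal m := by
        rw [setLIntegral_const, ← mul_assoc, hconst]
    _ ≤ ∫⁻ p in F ⁻¹' A, ENNReal.ofReal (hmcAcceptedDensity U h T (q, p)) :=
        setLIntegral_mono' (hF hA) fun p hp => ENNReal.ofReal_le_ofReal (hm p hp)
    _ ≤ hmcP U h T q A := setLIntegral_hmcAcceptedDensity_le_hmcP hF hA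

end Kernel

theorem hmc_compact_sets_small_general {d : ℕ}
    (U : EuclideanSpace ℝ (Fin d) → ℝ)
    (hU : ContDiff ℝ 2 U)
    (L₁ : ℝ) (hL₁ : 0 ≤ L₁)
    (hLip : ∀ q q' : EuclideanSpace ℝ (Fin d),
      ‖gradient U q - gradient U q'‖ ≤ L₁ * ‖q - q'‖)
    (T : ℕ) (hT : 1 ≤ T) :
    ∃ h' > (0 : ℝ), ∀ h ∈ Set.Ioc (0 : ℝ) h',
      ∀ B : Set (EuclideanSpace ℝ (Fin d)), IsCompact B →
        ∃ ε > (0 : ℝ), ∀ q ∈ B, ∀ A : Set (EuclideanSpace ℝ (Fin d)),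
          A ⊆ B → MeasurableSet A →
          ENNReal.ofReal ε * volume A ≤ hmcP U h T q A := by
  set K : ℝ≥0 := ⟨L₁, hL₁⟩
  have hgrad : LipschitzWith K (gradient U) :=
    LipschitzWith.of_dist_le_mul fun x y => by rw [dist_eq_norm, dist_eq_norm]; exact hLip x y
  obtain ⟨δ, hvol, hδ_pos, hδ⟩ := ((eventually_measure_image_le_of_approximatesDilation
    (volume : Measure (EuclideanSpace ℝ (Fin d)))).and
    (Ioo_mem_nhdsGT (by norm_num : (0 : ℝ≥0) < 1 / 2))).exists
  have hδ1 : δ < 1 := hδ.trans (by norm_num)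
  refine ⟨δ / (K * 3 ^ T * T + 1), by positivity, ?_⟩
  rintro h ⟨h0, hh⟩ B hB
  obtain ⟨h1, hK, hKh⟩ : h ≤ 1 ∧ h * K ≤ 1 ∧ K * 3 ^ T * T * h ≤ δ := by
    have hK3T : (K : ℝ) ≤ K * 3 ^ T * T := by
      rw [mul_assoc]
      exact le_mul_of_one_le_right K.2
        (one_le_mul_of_one_le_of_one_le (one_le_pow₀ (by norm_num)) (by exact_mod_cast hT))
    have hδ1' : (δ : ℝ) < 1 := by exact_mod_cast hδ1
    rw [le_div_iff₀ (by positivity)] at hh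
    exact ⟨by nlinarith, by nlinarith, by linarith⟩
  have hc : 0 < (T : ℝ) * h := by positivity
  have hF := approximatesDilation_iterate_leapfrog_fst hgrad h0.le h1 hK hKh
  have hΦ : Continuous (leapfrog U h) := continuous_leapfrog hgrad.continuous
  obtain ⟨R, hR⟩ := exists_norm_le_of_approximatesDilation hB hB.isBounded
    ((hΦ.iterate T).fst.comp (Continuous.prodMk_left 0)).continuousOn hc hδ1 fun q _ => hF q
  obtain ⟨m, hm, hρ⟩ := (hB.prod (isCompact_closedBall 0 R)).exists_forall_le'
    (continuous_hmcAcceptedDensity hU.continuous hΦ).continuousOn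
    fun x _ => hmcAcceptedDensity_pos (T := T) x
  refine ⟨m / (2 * (T * h) ^ d), by positivity, fun q hq A hAB hA => ?_⟩
  refine ofReal_mul_volume_le_hmcP hΦ hA hc ((hF q).surjective hc hδ1)
    (by simpa using hvol _ hc _ (hF q)) fun p hp => hρ (q, p) ⟨hq, ?_⟩
  exact mem_closedBall_zero_iff.2 (hR q hq p (hAB hp))

/-- under A1(β) with `U` twice continuously differentiable, for small
enough step sizes every compact set is a small set for the HMC kernel. -/
theorem hmc_compact_sets_small {d : ℕ}
    (U : EuclideanSpace ℝ (Fin d) → ℝ) (β : ℝ) (hβ : β ∈ Set.Icc (0 : ℝ) 1)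
    (hU : ContDiff ℝ 2 U)
    (L₁ : ℝ) (hL₁ : 0 ≤ L₁)
    (hLip : ∀ q q' : EuclideanSpace ℝ (Fin d),
      ‖gradient U q - gradient U q'‖ ≤ L₁ * ‖q - q'‖)
    (M₁ : ℝ) (hM₁ : 0 ≤ M₁)
    (hGrowth : ∀ q : EuclideanSpace ℝ (Fin d), ‖gradient U q‖ ≤ M₁ * (1 + ‖q‖ ^ β))
    (T : ℕ) (hT : 1 ≤ T) :
    ∃ h' > (0 : ℝ), ∀ h ∈ Set.Ioc (0 : ℝ) h',
      ∀ B : Set (EuclideanSpace ℝ (Fin d)), IsCompact B →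
        ∃ ε > (0 : ℝ), ∀ q ∈ B, ∀ A : Set (EuclideanSpace ℝ (Fin d)),
          A ⊆ B → MeasurableSet A →
          ENNReal.ofReal ε * volume A ≤ hmcP U h T q A :=
  hmc_compact_sets_small_general U hU L₁ hL₁ hLip T hT
end
end

section
/- Assume U satisfies A1(1) (i.e., β = 1). Then for every T ∈ ℕ* there exists h̄_T > 0 such that for all h ∈ (0,h̄_T]: (1) the Lebesgue measure is an irreducibility measure for the HMC kernel P_{h,T}, i.e., for every Borel A ⊆ ℝ^d with Leb(A) > 0 and every q ∈ ℝ^d, Σ_{n≥1} P_{h,T}^n(q,A) > 0; and (2) every compact set C ⊂ ℝ^d is small: there exist ε > 0 and M > 0 such that for all q ∈ C and all Borel A, P_{h,T}(q,A) ≥ ε Leb(A ∩ B(0,M)). -/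
open Real MeasureTheory Filter
noncomputable section

/-- Iterates `P_{h,T}^n(q, ·)` of the HMC kernel. -/
def hmcIter {d : ℕ} (U : EuclideanSpace ℝ (Fin d) → ℝ) (h : ℝ) (T : ℕ) :
    ℕ → EuclideanSpace ℝ (Fin d) → Measure (EuclideanSpace ℝ (Fin d))
  | 0 => fun q => Measure.dirac q
  | n + 1 => fun q => (hmcP U h T q).bind (hmcIter U h T n)

/-!
For fixed `q`, let `ψ_q p` be the position after `T` leapfrog steps of size `h` from `(q, p)`.
Leapfrog is kick ∘ drift ∘ kick, hence Lipschitz, and comparing it step by step with free flight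
`p ↦ q + T h p` shows that `ψ_q - T h • id` is `O(T² h²)`-Lipschitz. So for small `h` the rescaled
map `(T h)⁻¹ • ψ_q` is a small Lipschitz perturbation of the identity: it is onto, antilipschitz
(so `ψ_q⁻¹ (B(0, M))` is bounded uniformly for `q` in a compact set), and it at most doubles
Lebesgue measure. The density of accepted moves is continuous and positive, hence bounded below on
compact sets, and pushing it forward along `ψ_q` gives `P_{h,T}(q, A) ≥ ε Leb(A ∩ B(0, M))`
uniformly for `q` in a compact set. Irreducibility is the case `C = {q}` with `M` so large that
`Leb(A ∩ B(0, M)) > 0`.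
-/

open scoped NNReal ENNReal Topology Pointwise

section ApproximatesIdentity

variable {E : Type*} [NormedAddCommGroup E] [NormedSpace ℝ E] {f : E → E} {s : Set E}
  {c : ℝ≥0}

theorem ApproximatesLinearOn.one_sub_mul_norm_sub_le
    (hf : ApproximatesLinearOn f (ContinuousLinearMap.id ℝ E) s c) {x y : E} (hx : x ∈ s)
    (hy : y ∈ s) : (1 - c) * ‖x - y‖ ≤ ‖f x - f y‖ := by
  have happrox := hf x hx y hy
  have htri := norm_sub_norm_le (x - y) (f x - f y)
  rw [ContinuousLinearMap.id_apply, norm_sub_rev] at happrox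
  linarith

theorem ApproximatesLinearOn.surjective_of_id [CompleteSpace E]
    (hf : ApproximatesLinearOn f (ContinuousLinearMap.id ℝ E) Set.univ c) (hc : c < 1) :
    Function.Surjective f := by
  rw [← ContinuousLinearEquiv.coe_refl] at hf
  refine hf.surjective ?_
  rcases subsingleton_or_nontrivial E with hE | hE
  · exact .inl hE
  · right
    simpa [ContinuousLinearEquiv.coe_refl, ContinuousLinearMap.nnnorm_id] using hc

variable [MeasurableSpace E] [BorelSpace E] [FiniteDimensional ℝ E]

theorem exists_pos_forall_addHaar_image_le_two_mul (μ : Measure E) [μ.IsAddHaarMeasure] :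
    ∃ δ : ℝ≥0, 0 < δ ∧ ∀ (s : Set E) (f : E → E),
      ApproximatesLinearOn f (ContinuousLinearMap.id ℝ E) s δ → μ (f '' s) ≤ 2 * μ s := by
  have hdet : ENNReal.ofReal |(ContinuousLinearMap.id ℝ E).det| < (2 : ℝ≥0) := by
    simp [ContinuousLinearMap.det]
  obtain ⟨δ, hδ, hpos⟩ :=
    ((addHaar_image_le_mul_of_det_lt μ _ hdet).and self_mem_nhdsWithin).exists
  exact ⟨δ, hpos, fun s f hf => by simpa using hδ s f hf⟩

theorem addHaar_le_two_mul_addHaar_smul_preimage (μ : Measure E) [μ.IsAddHaarMeasure]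
    {g : E → E} (hg : Function.Surjective g) (hvol : ∀ s, μ (g '' s) ≤ 2 * μ s) {a : ℝ}
    (ha : a ≠ 0) (B : Set E) :
    μ B ≤ 2 * ENNReal.ofReal (|a| ^ Module.finrank ℝ E) * μ ((a • g) ⁻¹' B) := by
  have hsurj : Function.Surjective (a • g) := fun y => by
    obtain ⟨p, hp⟩ := hg (a⁻¹ • y)
    exact ⟨p, by simp [hp, smul_inv_smul₀ ha]⟩
  calc μ B = μ (a • (g '' ((a • g) ⁻¹' B))) := by
        conv_lhs => rw [← Set.image_preimage_eq B hsurj]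
        rw [← Set.image_smul, Set.image_image]; rfl
    _ = ENNReal.ofReal (|a| ^ Module.finrank ℝ E) * μ (g '' ((a • g) ⁻¹' B)) := by
        rw [Measure.addHaar_smul, abs_pow]
    _ ≤ ENNReal.ofReal (|a| ^ Module.finrank ℝ E) * (2 * μ ((a • g) ⁻¹' B)) := by
        gcongr; exact hvol _
    _ = 2 * ENNReal.ofReal (|a| ^ Module.finrank ℝ E) * μ ((a • g) ⁻¹' B) := by ring

end ApproximatesIdentity

theorem LipschitzWith.coe_nnreal_smul {α E : Type*} [PseudoEMetricSpace α]
    [SeminormedAddCommGroup E] [NormedSpace ℝ E] {K : ℝ≥0} {f : α → E}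
    (hf : LipschitzWith K f) (c : ℝ≥0) : LipschitzWith (c * K) fun x => (c : ℝ) • f x := by
  have := (lipschitzWith_smul (c : ℝ)).comp hf
  rwa [NNReal.nnnorm_eq] at this

theorem LipschitzWith.fst_iterate_prodMk {α β : Type*} [PseudoEMetricSpace α]
    [PseudoEMetricSpace β] {Λ : ℝ≥0} {f : α × β → α × β} (hf : LipschitzWith Λ f)
    (a : α) (n : ℕ) : LipschitzWith (Λ ^ n) fun b => (f^[n] (a, b)).1 := by
  have := LipschitzWith.prod_fst.comp ((hf.iterate n).comp (LipschitzWith.prodMk_left a))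
  rwa [one_mul, mul_one] at this

theorem exists_nat_pos_measure_inter_ball {X : Type*} [PseudoMetricSpace X] [MeasurableSpace X]
    {μ : Measure X} {A : Set X} (hA : 0 < μ A) (x : X) :
    ∃ n : ℕ, 0 < μ (A ∩ Metric.ball x n) := by
  by_contra! hnull
  have hA' : A = ⋃ n : ℕ, A ∩ Metric.ball x n := by
    rw [← Set.inter_iUnion, Metric.iUnion_ball_nat, Set.inter_univ]
  exact hA.ne' (hA' ▸ measure_iUnion_null fun n => nonpos_iff_eq_zero.1 (hnull n))

def leapfrogKick {d : ℕ} (U : EuclideanSpace ℝ (Fin d) → ℝ) (h : ℝ)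
    (x : EuclideanSpace ℝ (Fin d) × EuclideanSpace ℝ (Fin d)) :
    EuclideanSpace ℝ (Fin d) × EuclideanSpace ℝ (Fin d) :=
  (x.1, x.2 - (h / 2) • gradient U x.1)

def leapfrogDrift {d : ℕ} (h : ℝ)
    (x : EuclideanSpace ℝ (Fin d) × EuclideanSpace ℝ (Fin d)) :
    EuclideanSpace ℝ (Fin d) × EuclideanSpace ℝ (Fin d) :=
  (x.1 + h • x.2, x.2)

section Leapfrog

variable {d : ℕ} {U : EuclideanSpace ℝ (Fin d) → ℝ} {K : ℝ≥0}

theorem leapfrog_eq_leapfrogKick_comp_leapfrogDrift_comp_leapfrogKick (h : ℝ) :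
    leapfrog U h = leapfrogKick U h ∘ leapfrogDrift h ∘ leapfrogKick U h := rfl

theorem lipschitzWith_leapfrogKick (hG : LipschitzWith K (gradient U)) (h : ℝ≥0) :
    LipschitzWith (1 + h * K) (leapfrogKick U h) := by
  have hsmul : ‖((h : ℝ) / 2)‖₊ = h / 2 := by ext; simp
  refine (LipschitzWith.prod_fst.prodMk
    (LipschitzWith.prod_snd.sub ((lipschitzWith_smul ((h : ℝ) / 2)).comp
      (hG.comp LipschitzWith.prod_fst)))).weaken ?_
  rw [hsmul, mul_one]
  exact max_le le_self_add (by gcongr; exact NNReal.half_le_self h)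

theorem lipschitzWith_leapfrogDrift (h : ℝ≥0) :
    LipschitzWith (1 + h) (leapfrogDrift (d := d) h) := by
  refine ((LipschitzWith.prod_fst.add (LipschitzWith.prod_snd.coe_nnreal_smul h)).prodMk
    LipschitzWith.prod_snd).weaken ?_
  rw [mul_one]
  exact max_le le_rfl le_self_add

theorem lipschitzWith_leapfrog_s7 (hG : LipschitzWith K (gradient U)) (h : ℝ≥0) :
    LipschitzWith ((1 + h * K) ^ 2 * (1 + h)) (leapfrog U h) := by
  rw [leapfrog_eq_leapfrogKick_comp_leapfrogDrift_comp_leapfrogKick]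
  convert (lipschitzWith_leapfrogKick hG h).comp
    ((lipschitzWith_leapfrogDrift h).comp (lipschitzWith_leapfrogKick hG h)) using 1
  ring

theorem lipschitzWith_leapfrog_iterate_sub (hG : LipschitzWith K (gradient U)) {h Λ : ℝ≥0}
    (hΦ : LipschitzWith Λ (leapfrog U h)) (hΛ : 1 ≤ Λ) (q : EuclideanSpace ℝ (Fin d))
    (k : ℕ) :
    LipschitzWith (k * h * K * Λ ^ k) (fun p => ((leapfrog U h)^[k] (q, p)).2 - p) ∧
    LipschitzWith (k ^ 2 * h ^ 2 * K * Λ ^ k)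
      (fun p => ((leapfrog U h)^[k] (q, p)).1 - ((k : ℝ) * h) • p) := by
  induction k with
  | zero => simp
  | succ k ih =>
    obtain ⟨hmom, hposdef⟩ := ih
    have hmono : Λ ^ k ≤ Λ ^ (k + 1) := pow_le_pow_right₀ hΛ k.le_succ
    have hnext := hΦ.fst_iterate_prodMk q (k + 1)
    simp only [Function.iterate_succ_apply'] at hnext ⊢
    set x := fun p => (leapfrog U h)^[k] (q, p)
    constructor
    · have hsplit : (fun p => (leapfrog U h (x p)).2 - p) = fun p => ((x p).2 - p)
          - ((h / 2 : ℝ≥0) : ℝ) • gradient U (x p).1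
          - ((h / 2 : ℝ≥0) : ℝ) • gradient U (leapfrog U h (x p)).1 := by
        funext p; simp only [leapfrog]; push_cast; module
      rw [hsplit]
      refine ((hmom.sub ((hG.comp (hΦ.fst_iterate_prodMk q k)).coe_nnreal_smul _)).sub
        ((hG.comp hnext).coe_nnreal_smul _)).weaken ?_
      calc k * h * K * Λ ^ k + h / 2 * (K * Λ ^ k) + h / 2 * (K * Λ ^ (k + 1))
          ≤ k * h * K * Λ ^ (k + 1) + h / 2 * (K * Λ ^ (k + 1))
              + h / 2 * (K * Λ ^ (k + 1)) := by gcongr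
        _ = ↑(k + 1) * h * K * Λ ^ (k + 1) := by push_cast; ring
    · have hsplit : (fun p => (leapfrog U h (x p)).1 - (((k + 1 : ℕ) : ℝ) * h) • p) =
          fun p => ((x p).1 - ((k : ℝ) * h) • p) + (h : ℝ) • ((x p).2 - p)
            - ((h ^ 2 / 2 : ℝ≥0) : ℝ) • gradient U (x p).1 := by
        funext p; simp only [leapfrog]; push_cast; module
      rw [hsplit]
      refine ((hposdef.add (hmom.coe_nnreal_smul _)).sub
        ((hG.comp (hΦ.fst_iterate_prodMk q k)).coe_nnreal_smul _)).weaken ?_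
      have hk : (k : ℝ≥0) ^ 2 + k + 1 / 2 ≤ (k + 1) ^ 2 := by
        rw [← NNReal.coe_le_coe]; push_cast; nlinarith
      calc k ^ 2 * h ^ 2 * K * Λ ^ k + h * (k * h * K * Λ ^ k) + h ^ 2 / 2 * (K * Λ ^ k)
          = (k ^ 2 + k + 1 / 2) * h ^ 2 * K * Λ ^ k := by ring
        _ ≤ (k + 1) ^ 2 * h ^ 2 * K * Λ ^ (k + 1) := by gcongr
        _ = ↑(k + 1) ^ 2 * h ^ 2 * K * Λ ^ (k + 1) := by push_cast; ring

end Leapfrog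

def hmcProposal {d : ℕ} (U : EuclideanSpace ℝ (Fin d) → ℝ) (h : ℝ) (T : ℕ)
    (q p : EuclideanSpace ℝ (Fin d)) : EuclideanSpace ℝ (Fin d) :=
  ((leapfrog U h)^[T] (q, p)).1

def hmcDensity {d : ℕ} (U : EuclideanSpace ℝ (Fin d) → ℝ) (h : ℝ) (T : ℕ)
    (q p : EuclideanSpace ℝ (Fin d)) : ℝ :=
  (2 * π) ^ (-(d : ℝ) / 2) * hmcAccept U (q, p) ((leapfrog U h)^[T] (q, p)) *
    Real.exp (-‖p‖ ^ 2 / 2)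

section Proposal

variable {d : ℕ} {U : EuclideanSpace ℝ (Fin d) → ℝ} {K : ℝ≥0}

theorem approximatesLinearOn_hmcProposal (hG : LipschitzWith K (gradient U)) {h Λ : ℝ≥0}
    (hΦ : LipschitzWith Λ (leapfrog U h)) (hΛ : 1 ≤ Λ) (q : EuclideanSpace ℝ (Fin d))
    {T : ℕ} (hTh : (T : ℝ) * h ≠ 0) :
    ApproximatesLinearOn (((T : ℝ) * h)⁻¹ • hmcProposal U h T q)
      (ContinuousLinearMap.id ℝ _) Set.univ (T * h * K * Λ ^ T) := by
  have hdefect := lipschitzWith_iff_norm_sub_le.1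
    (lipschitzWith_leapfrog_iterate_sub hG hΦ hΛ q T).2
  set a : ℝ := T * h
  intro p _ p' _
  calc ‖(a⁻¹ • hmcProposal U h T q) p - (a⁻¹ • hmcProposal U h T q) p'
        - ContinuousLinearMap.id ℝ _ (p - p')‖
      = a⁻¹ * ‖(hmcProposal U h T q p - a • p) - (hmcProposal U h T q p' - a • p')‖ := by
        rw [← norm_smul_of_nonneg (by positivity)]
        congr 1
        simp only [Pi.smul_apply, ContinuousLinearMap.id_apply, smul_sub, inv_smul_smul₀ hTh]
        abel
    _ ≤ a⁻¹ * (↑(T ^ 2 * h ^ 2 * K * Λ ^ T) * ‖p - p'‖) := by gcongr; exact hdefect p p'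
    _ = ↑(T * h * K * Λ ^ T) * ‖p - p'‖ := by simp only [a]; push_cast; field_simp

theorem exists_pos_forall_approximatesLinearOn_hmcProposal (hG : LipschitzWith K (gradient U))
    {T : ℕ} (hT : T ≠ 0) {δ : ℝ≥0} (hδ : 0 < δ) :
    ∃ hbar : ℝ≥0, 0 < hbar ∧ ∀ h ∈ Set.Ioc 0 hbar, ∀ q : EuclideanSpace ℝ (Fin d),
      ApproximatesLinearOn (((T : ℝ) * h)⁻¹ • hmcProposal U h T q)
        (ContinuousLinearMap.id ℝ _) Set.univ δ := by
  set c : ℝ≥0 → ℝ≥0 := fun h => T * h * K * ((1 + h * K) ^ 2 * (1 + h)) ^ T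
  have hc : Tendsto c (𝓝 0) (𝓝 0) := by
    convert (show Continuous c by fun_prop).tendsto 0 using 2
    simp [c]
  obtain ⟨hbar, hcδ, hbar0⟩ :=
    (((hc.eventually (gt_mem_nhds hδ)).filter_mono nhdsWithin_le_nhds).and
      (self_mem_nhdsWithin (s := Set.Ioi 0))).exists
  refine ⟨hbar, hbar0, fun h ⟨hh, hle⟩ q => ?_⟩
  refine (approximatesLinearOn_hmcProposal hG (lipschitzWith_leapfrog_s7 hG h)
    (one_le_mul (one_le_pow₀ le_self_add) le_self_add) q (by positivity)).mono_num ?_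
  calc T * h * K * ((1 + h * K) ^ 2 * (1 + h)) ^ T ≤ c hbar := by simp only [c]; gcongr
    _ ≤ δ := hcδ.le

end Proposal

section HMC

variable {d : ℕ} {U : EuclideanSpace ℝ (Fin d) → ℝ} {h : ℝ} {T : ℕ}

open Metric

theorem hmcDensity_pos (q p : EuclideanSpace ℝ (Fin d)) : 0 < hmcDensity U h T q p := by
  unfold hmcDensity hmcAccept
  have : 0 < (2 * π) ^ (-(d : ℝ) / 2) := by positivity
  positivity

theorem continuous_hmcDensity (hU : Continuous U) (hΦ : Continuous (leapfrog U h)) :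
    Continuous fun x : EuclideanSpace ℝ (Fin d) × EuclideanSpace ℝ (Fin d) =>
      hmcDensity U h T x.1 x.2 := by
  have hH : Continuous (hamiltonian U) := by unfold hamiltonian; fun_prop
  have hΦT := hΦ.iterate T
  unfold hmcDensity hmcAccept
  fun_prop

theorem setLIntegral_hmcDensity_le_hmcP {q : EuclideanSpace ℝ (Fin d)}
    (hψ : Measurable (hmcProposal U h T q)) {A : Set (EuclideanSpace ℝ (Fin d))}
    (hA : MeasurableSet A) :
    ∫⁻ p in hmcProposal U h T q ⁻¹' A, ENNReal.ofReal (hmcDensity U h T q p) ≤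
      hmcP U h T q A := by
  calc ∫⁻ p in hmcProposal U h T q ⁻¹' A, ENNReal.ofReal (hmcDensity U h T q p)
      = Measure.map (hmcProposal U h T q)
          (volume.withDensity fun p => ENNReal.ofReal (hmcDensity U h T q p)) A := by
        rw [Measure.map_apply hψ hA, withDensity_apply _ (hψ hA)]
    _ ≤ hmcP U h T q A := Measure.le_add_right le_rfl A

theorem continuous_hmcProposal (hΦ : Continuous (leapfrog U h)) :
    Continuous fun x : EuclideanSpace ℝ (Fin d) × EuclideanSpace ℝ (Fin d) =>
      hmcProposal U h T x.1 x.2 :=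
  continuous_fst.comp (hΦ.iterate T)

theorem exists_forall_hmcProposal_preimage_ball_subset (hΦ : Continuous (leapfrog U h))
    {a : ℝ} (ha : 0 < a) {c : ℝ≥0} (hc : c < 1)
    (happrox : ∀ q, ApproximatesLinearOn (a⁻¹ • hmcProposal U h T q)
      (ContinuousLinearMap.id ℝ _) Set.univ c)
    {C : Set (EuclideanSpace ℝ (Fin d))} (hC : IsCompact C) (M : ℝ) :
    ∃ R, ∀ q ∈ C, hmcProposal U h T q ⁻¹' ball 0 M ⊆ closedBall 0 R := by
  obtain ⟨B, hB⟩ := (hC.image ((continuous_hmcProposal (T := T) hΦ).comp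
    (continuous_id.prodMk continuous_const))).isBounded.exists_norm_le
  refine ⟨(1 - (c : ℝ))⁻¹ * (a⁻¹ * (M + B)), fun q hq p hp => ?_⟩
  have hco := (happrox q).one_sub_mul_norm_sub_le (Set.mem_univ p) (Set.mem_univ 0)
  have hψ0 : ‖hmcProposal U h T q 0‖ ≤ B := hB _ ⟨q, hq, rfl⟩
  have hψp : ‖hmcProposal U h T q p‖ < M := mem_ball_zero_iff.1 hp
  rw [mem_closedBall_zero_iff, le_inv_mul_iff₀ (sub_pos.2 (by exact_mod_cast hc))]
  calc (1 - c) * ‖p‖ = (1 - c) * ‖p - 0‖ := by rw [sub_zero]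
    _ ≤ ‖a⁻¹ • hmcProposal U h T q p - a⁻¹ • hmcProposal U h T q 0‖ := hco
    _ = a⁻¹ * ‖hmcProposal U h T q p - hmcProposal U h T q 0‖ := by
        rw [← smul_sub, norm_smul_of_nonneg (by positivity)]
    _ ≤ a⁻¹ * (M + B) := by
        gcongr
        exact (norm_sub_le _ _).trans (by linarith)

theorem exists_pos_le_hmcDensity (hU : Continuous U) (hΦ : Continuous (leapfrog U h))
    {S : Set (EuclideanSpace ℝ (Fin d) × EuclideanSpace ℝ (Fin d))} (hS : IsCompact S) :
    ∃ ε > (0 : ℝ), ∀ x ∈ S, ε ≤ hmcDensity U h T x.1 x.2 :=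
  hS.exists_forall_le' (continuous_hmcDensity hU hΦ).continuousOn
    fun x _ => hmcDensity_pos x.1 x.2

theorem exists_pos_ofReal_mul_volume_inter_ball_le_hmcP (hU : Continuous U)
    (hΦ : Continuous (leapfrog U h)) {a : ℝ} (ha : 0 < a) {c : ℝ≥0} (hc : c < 1)
    (happrox : ∀ q, ApproximatesLinearOn (a⁻¹ • hmcProposal U h T q)
      (ContinuousLinearMap.id ℝ _) Set.univ c)
    (hvol : ∀ q s, volume ((a⁻¹ • hmcProposal U h T q) '' s) ≤ 2 * volume s)
    {C : Set (EuclideanSpace ℝ (Fin d))} (hC : IsCompact C) (M : ℝ) :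
    ∃ ε > (0 : ℝ), ∀ q ∈ C, ∀ A, MeasurableSet A →
      ENNReal.ofReal ε * volume (A ∩ ball 0 M) ≤ hmcP U h T q A := by
  obtain ⟨R, hR⟩ := exists_forall_hmcProposal_preimage_ball_subset hΦ ha hc happrox hC M
  obtain ⟨ε, hε, hdens⟩ :=
    exists_pos_le_hmcDensity (T := T) hU hΦ (hC.prod (isCompact_closedBall 0 R))
  refine ⟨ε / (2 * a ^ d), by positivity, fun q hq A hA => ?_⟩
  set S := hmcProposal U h T q ⁻¹' (A ∩ ball 0 M)
  have hψ : Continuous (hmcProposal U h T q) :=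
    (continuous_hmcProposal hΦ).comp (continuous_const.prodMk continuous_id)
  have hvolS : volume (A ∩ ball 0 M) ≤ 2 * ENNReal.ofReal (a ^ d) * volume S := by
    have := addHaar_le_two_mul_addHaar_smul_preimage volume
      ((happrox q).surjective_of_id hc) (hvol q) ha.ne' (A ∩ ball 0 M)
    rwa [finrank_euclideanSpace_fin, abs_of_pos ha, smul_inv_smul₀ ha.ne'] at this
  have hdensS : ENNReal.ofReal ε * volume S ≤ hmcP U h T q A :=
    calc ENNReal.ofReal ε * volume S = ∫⁻ _ in S, ENNReal.ofReal ε :=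
          (setLIntegral_const _ _).symm
      _ ≤ ∫⁻ p in S, ENNReal.ofReal (hmcDensity U h T q p) :=
          setLIntegral_mono ((continuous_hmcDensity hU hΦ).comp
            (continuous_const.prodMk continuous_id)).measurable.ennreal_ofReal
            fun p hp => ENNReal.ofReal_le_ofReal (hdens (q, p) ⟨hq, hR q hq hp.2⟩)
      _ ≤ ∫⁻ p in hmcProposal U h T q ⁻¹' A, ENNReal.ofReal (hmcDensity U h T q p) :=
          lintegral_mono_set (Set.preimage_mono Set.inter_subset_left)
      _ ≤ hmcP U h T q A := setLIntegral_hmcDensity_le_hmcP hψ.measurable hA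
  calc ENNReal.ofReal (ε / (2 * a ^ d)) * volume (A ∩ ball 0 M)
      ≤ ENNReal.ofReal (ε / (2 * a ^ d)) * (2 * ENNReal.ofReal (a ^ d) * volume S) := by gcongr
    _ = ENNReal.ofReal ε * volume S := by
        rw [← mul_assoc]
        congr 1
        rw [← ENNReal.ofReal_ofNat 2, ← ENNReal.ofReal_mul zero_le_two,
          ← ENNReal.ofReal_mul (by positivity), div_mul_cancel₀ _ (by positivity)]
    _ ≤ hmcP U h T q A := hdensS

theorem hmcIter_one : hmcIter U h T 1 = hmcP U h T :=
  funext fun _ => Measure.bind_dirac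

end HMC

theorem hmc_irreducible_and_small_linear_growth_general {d : ℕ}
    (U : EuclideanSpace ℝ (Fin d) → ℝ)
    (hU : ContDiff ℝ 1 U)
    (L₁ : ℝ)
    (hLip : ∀ q q' : EuclideanSpace ℝ (Fin d),
      ‖gradient U q - gradient U q'‖ ≤ L₁ * ‖q - q'‖)
    (T : ℕ) (hT : 1 ≤ T) :
    ∃ hbar > (0 : ℝ), ∀ h ∈ Set.Ioc (0 : ℝ) hbar,
      (∀ A : Set (EuclideanSpace ℝ (Fin d)), MeasurableSet A → 0 < volume A →
        ∀ q : EuclideanSpace ℝ (Fin d), 0 < ∑' n : ℕ, hmcIter U h T (n + 1) q A) ∧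
      (∀ C : Set (EuclideanSpace ℝ (Fin d)), IsCompact C →
        ∃ ε > (0 : ℝ), ∃ M > (0 : ℝ), ∀ q ∈ C,
          ∀ A : Set (EuclideanSpace ℝ (Fin d)), MeasurableSet A →
            ENNReal.ofReal ε * volume (A ∩ Metric.ball (0 : EuclideanSpace ℝ (Fin d)) M) ≤
              hmcP U h T q A) := by
  have hG : LipschitzWith (Real.toNNReal L₁) (gradient U) :=
    LipschitzWith.of_dist_le' fun q q' => by simpa only [dist_eq_norm] using hLip q q'
  obtain ⟨δ, hδ, hvol⟩ := exists_pos_forall_addHaar_image_le_two_mul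
    (volume : Measure (EuclideanSpace ℝ (Fin d)))
  obtain ⟨hbar, hbar0, happrox⟩ :=
    exists_pos_forall_approximatesLinearOn_hmcProposal hG (T := T) (by omega)
      (δ := min δ (1 / 2)) (by positivity)
  refine ⟨hbar, hbar0, fun h ⟨hh, hle⟩ => ?_⟩
  lift h to ℝ≥0 using hh.le
  have hmem : h ∈ Set.Ioc 0 hbar := ⟨by exact_mod_cast hh, by exact_mod_cast hle⟩
  have hsmall {C : Set (EuclideanSpace ℝ (Fin d))} (hC : IsCompact C) (M : ℝ) :=
    exists_pos_ofReal_mul_volume_inter_ball_le_hmcP hU.continuous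
      (lipschitzWith_leapfrog_s7 hG h).continuous (a := T * h) (by positivity)
      ((min_le_right _ _).trans_lt (by norm_num)) (happrox h hmem)
      (fun q s => hvol s _ (((happrox h hmem q).mono_set (Set.subset_univ s)).mono_num
        (min_le_left _ _))) hC M
  refine ⟨fun A hA hApos q => ?_, fun C hC => ?_⟩
  · obtain ⟨n, hn⟩ := exists_nat_pos_measure_inter_ball hApos 0
    obtain ⟨ε, hε, hP⟩ := hsmall isCompact_singleton n
    refine lt_of_lt_of_le ?_ (ENNReal.le_tsum 0)
    rw [zero_add, hmcIter_one]
    exact (ENNReal.mul_pos (by simpa using hε) hn.ne').trans_le (hP q rfl A hA)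
  · obtain ⟨ε, hε, hP⟩ := hsmall hC 1
    exact ⟨ε, hε, 1, one_pos, hP⟩

/-- under A1(1) (`β = 1`), for every `T ≥ 1` there exists `h̄_T > 0` such
that for all `h ∈ (0, h̄_T]` the Lebesgue measure is an irreducibility measure for the
HMC kernel and every compact set is small. -/
theorem hmc_irreducible_and_small_linear_growth {d : ℕ}
    (U : EuclideanSpace ℝ (Fin d) → ℝ)
    (hU : ContDiff ℝ 1 U)
    (L₁ : ℝ) (hL₁ : 0 ≤ L₁)
    (hLip : ∀ q q' : EuclideanSpace ℝ (Fin d),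
      ‖gradient U q - gradient U q'‖ ≤ L₁ * ‖q - q'‖)
    (M₁ : ℝ) (hM₁ : 0 ≤ M₁)
    (hGrowth : ∀ q : EuclideanSpace ℝ (Fin d), ‖gradient U q‖ ≤ M₁ * (1 + ‖q‖))
    (T : ℕ) (hT : 1 ≤ T) :
    ∃ hbar > (0 : ℝ), ∀ h ∈ Set.Ioc (0 : ℝ) hbar,
      (∀ A : Set (EuclideanSpace ℝ (Fin d)), MeasurableSet A → 0 < volume A →
        ∀ q : EuclideanSpace ℝ (Fin d), 0 < ∑' n : ℕ, hmcIter U h T (n + 1) q A) ∧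
      (∀ C : Set (EuclideanSpace ℝ (Fin d)), IsCompact C →
        ∃ ε > (0 : ℝ), ∃ M > (0 : ℝ), ∀ q ∈ C,
          ∀ A : Set (EuclideanSpace ℝ (Fin d)), MeasurableSet A →
            ENNReal.ofReal ε * volume (A ∩ Metric.ball (0 : EuclideanSpace ℝ (Fin d)) M) ≤
              hmcP U h T q A) :=
  hmc_irreducible_and_small_linear_growth_general U hU L₁ hLip T hT
end
end

section
/- Let K be a Markov kernel from ℝ^d to ℝ^{2d}, α : ℝ^d × ℝ^{2d} → [0,1] Borel measurable, and define the Markov kernel P on ℝ^d by P(q,A) = ∫ 1_A(proj(z)) α(q,z) K(q,dz) + δ_q(A) ∫ (1 − α(q,z)) K(q,dz), where proj : ℝ^{2d} → ℝ^d is the projection onto the first d coordinates. Let V : ℝ^d → [1,∞) be measurable and set, for q ∈ ℝ^d, R(q) = {z ∈ ℝ^{2d} : α(q,z) < 1} and B(q) = {z ∈ ℝ^{2d} : V(proj(z)) ≤ V(q)}. Suppose (1) there exist λ ∈ [0,1) and b ≥ 0 such that ∫ V(proj(z)) K(q,dz) ≤ λ V(q) + b for all q, and (2) lim_{M→∞}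 sup_{q : V(q) ≥ M} K(q, R(q) ∩ B(q)) = 0. Then there exist λ̃ ∈ [0,1) and b̃ ≥ 0 such that P V(q) ≤ λ̃ V(q) + b̃ for all q ∈ ℝ^d, where P V(q) = ∫ V(proj(z)) α(q,z) K(q,dz) + V(q) ∫ (1 − α(q,z)) K(q,dz). -/
/-!
Write `S q = {z | α q z < 1} ∩ {z | V z.1 ≤ V q}`. Pointwise, `V z.1 α + V q (1 - α) ≤ V z.1` unless
`z ∈ S q`, where it is at most `V z.1 + V q`; hence `P V q ≤ K V q + V q · K q (S q)`. The drift of `K`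
bounds the first term by `λ V q + b`. For `ε = (1 - λ) / 2` there is a level `M` above which
`K q (S q) < ε`, and below it `V q · K q (S q) ≤ M`, so `P V q ≤ (λ + ε) V q + b + M`.
-/

open MeasureTheory Filter ProbabilityTheory

theorem ofReal_mul_add_ofReal_mul_one_sub_le {a v w : ℝ} (ha : a ∈ Set.Icc (0 : ℝ) 1)
    (hv : 0 ≤ v) (hw : 0 ≤ w) :
    ENNReal.ofReal (w * a) + ENNReal.ofReal (v * (1 - a)) ≤
      ENNReal.ofReal w + if a < 1 ∧ w ≤ v then ENNReal.ofReal v else 0 := by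
  obtain ⟨ha0, ha1⟩ := ha
  rw [← ENNReal.ofReal_add (by positivity) (mul_nonneg hv (by linarith))]
  split_ifs with h
  · rw [← ENNReal.ofReal_add hw hv]
    exact ENNReal.ofReal_le_ofReal (by nlinarith)
  · rw [add_zero]
    refine ENNReal.ofReal_le_ofReal ?_
    rcases not_and_or.mp h with h | h
    · obtain rfl : a = 1 := le_antisymm ha1 (not_lt.mp h)
      simp
    · nlinarith [not_le.mp h]

theorem lintegral_accept_reject_le {Z : Type*} [MeasurableSpace Z] (μ : Measure Z)
    {a W : Z → ℝ} (ha_meas : Measurable a) (ha : ∀ z, a z ∈ Set.Icc (0 : ℝ) 1)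
    (hW_meas : Measurable W) (hW : ∀ z, 0 ≤ W z) {v : ℝ} (hv : 0 ≤ v) :
    (∫⁻ z, ENNReal.ofReal (W z * a z) ∂μ) + ENNReal.ofReal v * ∫⁻ z, ENNReal.ofReal (1 - a z) ∂μ ≤
      (∫⁻ z, ENNReal.ofReal (W z) ∂μ) +
        ENNReal.ofReal v * μ ({z | a z < 1} ∩ {z | W z ≤ v}) := by
  set S := {z | a z < 1} ∩ {z | W z ≤ v}
  have hS : MeasurableSet S :=
    (measurableSet_lt ha_meas measurable_const).inter (measurableSet_le hW_meas measurable_const)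
  rw [← lintegral_const_mul _ (f := fun z => ENNReal.ofReal (1 - a z))
      (measurable_const.sub ha_meas).ennreal_ofReal,
    ← lintegral_indicator_const hS, ← lintegral_add_left (f := fun z => ENNReal.ofReal (W z * a z))
      (hW_meas.mul ha_meas).ennreal_ofReal,
    ← lintegral_add_left (f := fun z => ENNReal.ofReal (W z)) hW_meas.ennreal_ofReal]
  refine lintegral_mono fun z => ?_
  rw [← ENNReal.ofReal_mul hv, Set.indicator_apply]
  exact ofReal_mul_add_ofReal_mul_one_sub_le (ha z) hv (hW z)

theorem eventually_forall_lt_of_tendsto_biSup {X : Type*} {V g : X → ℝ}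
    (hg : BddAbove (Set.range g))
    (h : Tendsto (fun M : ℝ => ⨆ q ∈ {q | M ≤ V q}, g q) atTop (nhds 0)) {ε : ℝ} (hε : 0 < ε) :
    ∀ᶠ M in atTop, ∀ q, M ≤ V q → g q < ε := by
  filter_upwards [h.eventually (gt_mem_nhds hε)] with M hM q hq
  have hbdd : BddAbove (⋃ q, Set.range fun _ : q ∈ {q | M ≤ V q} => g q) :=
    hg.mono <| Set.iUnion_subset fun q => Set.range_subset_iff.mpr fun _ => Set.mem_range_self q
  exact (le_ciSup₂ (f := fun q (_ : q ∈ {q | M ≤ V q}) => g q) hbdd q hq).trans_lt hM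

theorem ofReal_mul_le_of_le_one {p : ENNReal} {v ε M : ℝ} (hp : p ≤ 1) (hv : 0 ≤ v) (hε : 0 ≤ ε)
    (hM : 0 ≤ M) (hpε : M ≤ v → p ≤ ENNReal.ofReal ε) :
    ENNReal.ofReal v * p ≤ ENNReal.ofReal (ε * v + M) := by
  by_cases hvM : M ≤ v
  · calc ENNReal.ofReal v * p ≤ ENNReal.ofReal v * ENNReal.ofReal ε := by gcongr; exact hpε hvM
      _ = ENNReal.ofReal (v * ε) := (ENNReal.ofReal_mul hv).symm
      _ ≤ ENNReal.ofReal (ε * v + M) := ENNReal.ofReal_le_ofReal (by linarith)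
  · calc ENNReal.ofReal v * p ≤ ENNReal.ofReal v := mul_le_of_le_one_right' hp
      _ ≤ ENNReal.ofReal (ε * v + M) := ENNReal.ofReal_le_ofReal (by nlinarith)

/-- Foster–Lyapunov drift for a generalized Metropolis–Hastings kernel.
If the proposal kernel `K` satisfies a geometric drift condition for `V` and the mass of
the intersection of the potential-rejection region with the sublevel region of `V`
vanishes uniformly as `V(q) → ∞`, then the accept/reject kernel `P` satisfies a
geometric drift condition as well. -/
theorem metropolis_drift {d : ℕ}
    (K : Kernel (EuclideanSpace ℝ (Fin d))
      (EuclideanSpace ℝ (Fin d) × EuclideanSpace ℝ (Fin d)))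
    [IsMarkovKernel K]
    (α : EuclideanSpace ℝ (Fin d) →
      EuclideanSpace ℝ (Fin d) × EuclideanSpace ℝ (Fin d) → ℝ)
    (hα_meas : Measurable (Function.uncurry α))
    (hα : ∀ q z, α q z ∈ Set.Icc (0 : ℝ) 1)
    (V : EuclideanSpace ℝ (Fin d) → ℝ) (hV_meas : Measurable V)
    (hV_one : ∀ q, 1 ≤ V q)
    (lam : ℝ) (hlam : lam ∈ Set.Ico (0 : ℝ) 1) (b : ℝ) (hb : 0 ≤ b)
    (hdrift : ∀ q, ∫⁻ z, ENNReal.ofReal (V z.1) ∂(K q) ≤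
      ENNReal.ofReal (lam * V q + b))
    (hrej : Tendsto (fun M : ℝ =>
        ⨆ q ∈ {q : EuclideanSpace ℝ (Fin d) | M ≤ V q},
          (K q ({z | α q z < 1} ∩ {z | V z.1 ≤ V q})).toReal)
      atTop (nhds 0)) :
    ∃ lam' ∈ Set.Ico (0 : ℝ) 1, ∃ b' ≥ (0 : ℝ), ∀ q,
      (∫⁻ z, ENNReal.ofReal (V z.1 * α q z) ∂(K q)) +
          ENNReal.ofReal (V q) * (∫⁻ z, ENNReal.ofReal (1 - α q z) ∂(K q)) ≤
        ENNReal.ofReal (lam' * V q + b') := by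
  obtain ⟨hlam0, hlam1⟩ := hlam
  obtain ⟨ε, hε, hlamε⟩ : ∃ ε > 0, lam + ε < 1 := ⟨(1 - lam) / 2, by linarith, by linarith⟩
  have hV : ∀ q, 0 ≤ V q := fun q => zero_le_one.trans (hV_one q)
  obtain ⟨M, hM, hM0⟩ := ((eventually_forall_lt_of_tendsto_biSup
    ⟨1, by rintro _ ⟨q, rfl⟩; exact measureReal_le_one⟩ hrej hε).and (eventually_ge_atTop 0)).exists
  refine ⟨lam + ε, ⟨by linarith, hlamε⟩, b + M, by linarith, fun q => ?_⟩
  calc _ ≤ (∫⁻ z, ENNReal.ofReal (V z.1) ∂(K q)) +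
        ENNReal.ofReal (V q) * K q ({z | α q z < 1} ∩ {z | V z.1 ≤ V q}) :=
        lintegral_accept_reject_le (K q) (hα_meas.comp measurable_prodMk_left) (hα q)
          (hV_meas.comp measurable_fst) (fun z => hV z.1) (hV q)
    _ ≤ ENNReal.ofReal (lam * V q + b) + ENNReal.ofReal (ε * V q + M) :=
        add_le_add (hdrift q) <| ofReal_mul_le_of_le_one prob_le_one (hV q) hε.le hM0 fun hq =>
          (ENNReal.le_ofReal_iff_toReal_le (measure_ne_top _ _) hε.le).mpr (hM q hq).le
    _ = ENNReal.ofReal ((lam + ε) * V q + (b + M)) := by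
        rw [← ENNReal.ofReal_add (by nlinarith [hV q]) (by nlinarith [hV q])]
        ring_nf
end

section
/- Let m ∈ (1,2) and assume U satisfies A2(m)(i) and A2(m)(ii). Let T ∈ ℕ* and γ ∈ [0,m−1). Then for all h > 0 there exists R_H ≥ 0 such that for all q₀, p₀ ∈ ℝ^d with ‖q₀‖ ≥ R_H and ‖p₀‖ ≤ ‖q₀‖^γ: H(Φ_h^{∘T}(q₀,p₀)) − H(q₀,p₀) ≤ 0, where H(q,p) = U(q) + ‖p‖²/2. -/
/-!
Write `q_k` for the positions and `p_{k+1/2}` for the half-step momenta of the leapfrog trajectory.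
One step changes the energy by the error of the trapezoidal rule for `U` on `[q_k, q_{k+1}]` plus
`h²/8 (‖∇U(q_{k+1})‖² - ‖∇U(q_k)‖²)`. If `r = ‖q₀‖` is large, the first `T` steps stay in the ball
of radius `r/2` about `q₀`, where `∇U`, `D²U`, `D³U` are of size `r^(m-1)`, `r^(m-2)`, `r^(m-3)`,
and `p_{k+1/2} ≈ p₀ - h(k+1/2)∇U(q_k)` points against the gradient. By A2(m)(ii) the
gradient-norm term then drops by at least a constant times `h⁴ r^(3m-4)`, while every error term is
`O(r^(4m-6) + r^(2m-3+γ))`, which is smaller since `m < 2` and `γ < m - 1`.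
-/

open Real
noncomputable section

open Set Filter Asymptotics Metric

section LineCalculus

variable {E F : Type*} [NormedAddCommGroup E] [NormedSpace ℝ E]
  [NormedAddCommGroup F] [NormedSpace ℝ F]

theorem HasFDerivAt.hasDerivAt_add_smul {f : E → F} {f' : E →L[ℝ] F} {a v : E} {t : ℝ}
    (hf : HasFDerivAt f f' (a + t • v)) : HasDerivAt (fun s : ℝ => f (a + s • v)) (f' v) t := by
  simpa [Function.comp_def] using
    hf.comp_hasDerivAt t (((hasDerivAt_id t).smul_const v).const_add a)

theorem abs_trapezoid_error_le_of_hasDerivAt {g g₁ g₂ g₃ : ℝ → ℝ} {C : ℝ}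
    (h₁ : ∀ t ∈ Icc (0 : ℝ) 1, HasDerivAt g (g₁ t) t)
    (h₂ : ∀ t ∈ Icc (0 : ℝ) 1, HasDerivAt g₁ (g₂ t) t)
    (h₃ : ∀ t ∈ Icc (0 : ℝ) 1, HasDerivAt g₂ (g₃ t) t)
    (hC : ∀ t ∈ Icc (0 : ℝ) 1, |g₃ t| ≤ C) :
    |g 1 - g 0 - (g₁ 0 + g₁ 1) / 2| ≤ C / 2 := by
  -- `ψ` is the derivative of `2 χ`, and `ψ' t = -t g₃ t`.
  set ψ : ℝ → ℝ := fun t => g₁ t - g₁ 0 - t * g₂ t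
  set χ : ℝ → ℝ := fun t => g t - g 0 - t * (g₁ 0 + g₁ t) / 2
  have hψ : ∀ t ∈ Icc (0 : ℝ) 1, |ψ t| ≤ C * t := by
    have := norm_image_sub_le_of_norm_deriv_le_segment' (f := ψ) (f' := fun t => -(t * g₃ t))
      (fun t ht => by
        have := ((h₂ t ht).sub_const (g₁ 0)).sub ((hasDerivAt_id t).mul (h₃ t ht))
        exact (this.congr_deriv (by simp)).hasDerivWithinAt)
      (fun t ht => by
        rw [norm_neg, norm_mul, Real.norm_eq_abs, Real.norm_eq_abs, abs_of_nonneg ht.1]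
        nlinarith [hC t (Ico_subset_Icc_self ht), abs_nonneg (g₃ t), ht.2.le])
    simpa [ψ] using this
  have hχ := norm_image_sub_le_of_norm_deriv_le_segment_01' (f := χ) (f' := fun t => ψ t / 2)
    (C := C / 2)
    (fun t ht => by
      have := ((h₁ t ht).sub_const (g 0)).sub
        ((((hasDerivAt_id t).mul ((h₂ t ht).const_add (g₁ 0)))).div_const 2)
      exact (this.congr_deriv (by simp [ψ]; ring)).hasDerivWithinAt)
    (fun t ht => by
      rw [Real.norm_eq_abs, abs_div, abs_two]
      have hC0 : 0 ≤ C := (abs_nonneg _).trans (hC 0 (by simp))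
      nlinarith [hψ t (Ico_subset_Icc_self ht), ht.2.le])
  simpa [χ] using hχ

theorem sub_le_of_fderiv_apply_le {f : E → ℝ} {f' : E → E →L[ℝ] ℝ} {a b : E} {C : ℝ}
    (hf : ∀ x ∈ segment ℝ a b, HasFDerivAt f (f' x) x)
    (hC : ∀ x ∈ segment ℝ a b, f' x (b - a) ≤ C) : f b - f a ≤ C := by
  have hseg : ∀ t ∈ Icc (0 : ℝ) 1, a + t • (b - a) ∈ segment ℝ a b := fun t ht =>
    (convex_segment a b).add_smul_sub_mem (left_mem_segment ℝ a b) (right_mem_segment ℝ a b) ht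
  have hg : ∀ t ∈ Icc (0 : ℝ) 1, HasDerivAt (fun s : ℝ => f (a + s • (b - a)))
      (f' (a + t • (b - a)) (b - a)) t :=
    fun t ht => (hf _ (hseg t ht)).hasDerivAt_add_smul
  have := (convex_Icc (0 : ℝ) 1).image_sub_le_mul_sub_of_deriv_le
    (fun t ht => (hg t ht).continuousAt.continuousWithinAt)
    (fun t ht => (hg t (interior_subset ht)).differentiableAt.differentiableWithinAt)
    (fun t ht => (hg t (interior_subset ht)).deriv ▸ hC _ (hseg t (interior_subset ht)))
    0 (by simp) 1 (by simp) zero_le_one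
  simpa using this

theorem fderiv_fderiv_fderiv_apply (f : E → ℝ) (x u v w : E) :
    fderiv ℝ (fderiv ℝ (fderiv ℝ f)) x u v w = iteratedFDeriv ℝ 3 f x ![u, v, w] := by
  rw [iteratedFDeriv_succ_apply_right, iteratedFDeriv_two_apply]
  rfl

theorem norm_fderiv_fderiv_eq (U : E → ℝ) (x : E) :
    ‖fderiv ℝ (fderiv ℝ U) x‖ = ‖iteratedFDeriv ℝ 2 U x‖ := by
  rw [← norm_iteratedFDeriv_one, norm_iteratedFDeriv_fderiv]

theorem abs_trapezoid_error_le_of_norm_iteratedFDeriv_le {f : E → ℝ} (hf : ContDiff ℝ 3 f)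
    {a b : E} {M : ℝ}
    (hM : ∀ x ∈ segment ℝ a b, ‖iteratedFDeriv ℝ 3 f x‖ ≤ M) :
    |f b - f a - (fderiv ℝ f a (b - a) + fderiv ℝ f b (b - a)) / 2| ≤ M * ‖b - a‖ ^ 3 / 2 := by
  set v := b - a
  have hseg : ∀ t ∈ Icc (0 : ℝ) 1, a + t • v ∈ segment ℝ a b := fun t ht =>
    (convex_segment a b).add_smul_sub_mem (left_mem_segment ℝ a b) (right_mem_segment ℝ a b) ht
  have hf₂ : ContDiff ℝ 2 (fderiv ℝ f) := hf.fderiv_right (by norm_num)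
  have hf₁ : ContDiff ℝ 1 (fderiv ℝ (fderiv ℝ f)) := hf₂.fderiv_right (by norm_num)
  have := abs_trapezoid_error_le_of_hasDerivAt (g := fun t => f (a + t • v))
    (g₁ := fun t => fderiv ℝ f (a + t • v) v)
    (g₂ := fun t => fderiv ℝ (fderiv ℝ f) (a + t • v) v v)
    (g₃ := fun t => fderiv ℝ (fderiv ℝ (fderiv ℝ f)) (a + t • v) v v v) (C := M * ‖v‖ ^ 3)
    (fun t _ => (hf.differentiable (by norm_num) _).hasFDerivAt.hasDerivAt_add_smul)
    (fun t _ => by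
      simpa using (hf₂.differentiable (by norm_num) _).hasFDerivAt.hasDerivAt_add_smul.clm_apply
        (hasDerivAt_const t v))
    (fun t _ => by
      simpa using ((hf₁.differentiable one_ne_zero _).hasFDerivAt.hasDerivAt_add_smul.clm_apply
        (hasDerivAt_const t v)).clm_apply (hasDerivAt_const t v))
    (fun t ht => by
      rw [fderiv_fderiv_fderiv_apply, ← Real.norm_eq_abs]
      refine ((iteratedFDeriv ℝ 3 f _).le_opNorm ![v, v, v]).trans ?_
      simp only [Fin.prod_univ_three, Matrix.cons_val, ← pow_three']
      gcongr
      exact hM _ (hseg t ht))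
  simpa [v] using this

theorem norm_le_of_norm_fderiv_le_rpow {f : E → F} {f' : E → E →L[ℝ] F} {A s : ℝ} (hs : 0 < s)
    (hA : 0 ≤ A) (hf : ∀ y, HasFDerivAt f (f' y) y)
    (hf' : ∀ y, ‖f' y‖ ≤ A * (1 + ‖y‖) ^ (s - 1)) (x : E) :
    ‖f x‖ ≤ (‖f 0‖ + A / s) * (1 + ‖x‖) ^ s := by
  set B : ℝ → ℝ := fun t => ‖f 0‖ + A / s * (1 + t * ‖x‖) ^ s
  have hB : ∀ t, 0 ≤ t → HasDerivAt B (A * (1 + t * ‖x‖) ^ (s - 1) * ‖x‖) t := fun t ht => by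
    have := ((((hasDerivAt_id t).mul_const ‖x‖).const_add 1).rpow_const
      (p := s) (Or.inl (by positivity))).const_mul (A / s) |>.const_add ‖f 0‖
    refine this.congr_deriv ?_
    simp only [id]
    field_simp
  have hft : ∀ t : ℝ, HasDerivAt (fun t : ℝ => f (t • x)) (f' (t • x) x) t := fun t => by
    simpa using (hf (0 + t • x)).hasDerivAt_add_smul (a := 0)
  have key := image_norm_le_of_norm_deriv_right_le_deriv_boundary'
    (f := fun t : ℝ => f (t • x)) (B := B) (a := 0) (b := 1)
    (fun t _ => (hft t).continuousAt.continuousWithinAt)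
    (fun t _ => (hft t).hasDerivWithinAt)
    (by simp [B, div_nonneg hA hs.le])
    (fun t ht => (hB t ht.1).continuousAt.continuousWithinAt)
    (fun t ht => (hB t ht.1).hasDerivWithinAt)
    (fun t ht => by
      refine ((f' _).le_opNorm x).trans (mul_le_mul_of_nonneg_right ?_ (norm_nonneg x))
      simpa [norm_smul, abs_of_nonneg ht.1] using hf' (t • x))
    (right_mem_Icc.2 zero_le_one)
  have hone : 1 ≤ (1 + ‖x‖) ^ s := one_le_rpow (by simp) hs.le
  simp only [one_smul, one_mul, B] at key
  nlinarith [norm_nonneg (f 0), div_nonneg hA hs.le]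

end LineCalculus

theorem ContinuousLinearMap.abs_apply_self_sub_apply_self_le {E : Type*}
    [SeminormedAddCommGroup E] [NormedSpace ℝ E] (B : E →L[ℝ] E →L[ℝ] ℝ) (u v : E) :
    |B u u - B v v| ≤ ‖B‖ * ‖u - v‖ * (‖u‖ + ‖v‖) := by
  have hsplit : B u u - B v v = B (u - v) u + B v (u - v) := by
    simp only [map_sub, FunLike.coe_sub, Pi.sub_apply]; ring
  rw [hsplit, ← Real.norm_eq_abs]
  calc _ ≤ ‖B (u - v) u‖ + ‖B v (u - v)‖ := norm_add_le _ _
    _ ≤ ‖B‖ * ‖u - v‖ * ‖u‖ + ‖B‖ * ‖v‖ * ‖u - v‖ :=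
      add_le_add (B.le_opNorm₂ _ _) (B.le_opNorm₂ _ _)
    _ = ‖B‖ * ‖u - v‖ * (‖u‖ + ‖v‖) := by ring

theorem ContinuousLinearMap.apply_smul_sub_smul_le {E : Type*} [SeminormedAddCommGroup E]
    [NormedSpace ℝ E] (B : E →L[ℝ] E →L[ℝ] ℝ) {g g' w : E} {h κ T L G W ε ρ : ℝ} (hh : 0 ≤ h)
    (hκ : 1 / 2 ≤ κ) (hκT : κ ≤ T) (hρ0 : 0 ≤ ρ) (hB : ‖B‖ ≤ L) (hw : ‖w‖ ≤ W) (hg : ‖g‖ ≤ G)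
    (hg' : ‖g'‖ ≤ G) (hε : ‖g' - g‖ ≤ ε) (hρ : ρ ≤ B g' g') :
    B (h • (w - (h * κ) • g)) g ≤ h * L * G * W + 2 * h ^ 2 * T * L * G * ε - h ^ 2 * ρ / 2 := by
  have hL0 : 0 ≤ L := (norm_nonneg B).trans hB
  have hG0 : 0 ≤ G := (norm_nonneg _).trans hg
  have hε0 : 0 ≤ ε := (norm_nonneg _).trans hε
  have hBw : B w g ≤ L * W * G := (le_abs_self _).trans <| (B.le_opNorm₂ w g).trans <|
    mul_le_mul (mul_le_mul hB hw (norm_nonneg _) hL0) hg (norm_nonneg _)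
      (mul_nonneg hL0 ((norm_nonneg _).trans hw))
  have hBg : ρ - 2 * L * G * ε ≤ B g g := by
    have habs := B.abs_apply_self_sub_apply_self_le g' g
    have : ‖B‖ * ‖g' - g‖ * (‖g'‖ + ‖g‖) ≤ L * ε * (G + G) :=
      mul_le_mul (mul_le_mul hB hε (norm_nonneg _) hL0) (add_le_add hg' hg) (by positivity)
        (mul_nonneg hL0 hε0)
    linarith [(abs_le.1 habs).2]
  have hexpand : B (h • (w - (h * κ) • g)) g = h * B w g - h ^ 2 * κ * B g g := by
    simp only [map_smul, map_sub, FunLike.coe_sub, FunLike.coe_smul, Pi.sub_apply, Pi.smul_apply,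
      smul_eq_mul]
    ring
  have hκ0 : 0 ≤ h ^ 2 * κ := by positivity
  rw [hexpand]
  nlinarith [mul_le_mul_of_nonneg_left hBw hh, mul_le_mul_of_nonneg_left hBg hκ0,
    mul_le_mul_of_nonneg_left hκT (by positivity : 0 ≤ h ^ 2 * (L * G * ε)),
    mul_le_mul_of_nonneg_left hκ (by positivity : 0 ≤ h ^ 2 * ρ)]

section Gradient

variable {E : Type*} [NormedAddCommGroup E] [InnerProductSpace ℝ E] [CompleteSpace E]

theorem norm_gradient (U : E → ℝ) (x : E) : ‖gradient U x‖ = ‖fderiv ℝ U x‖ :=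
  LinearIsometryEquiv.norm_map _ _

theorem norm_gradient_sub_le {U : E → ℝ} (hU : ContDiff ℝ 2 U) {K : Set E} (hK : Convex ℝ K)
    {L : ℝ} (hL : ∀ x ∈ K, ‖iteratedFDeriv ℝ 2 U x‖ ≤ L) {x y : E} (hx : x ∈ K) (hy : y ∈ K) :
    ‖gradient U x - gradient U y‖ ≤ L * ‖x - y‖ := by
  rw [gradient, gradient, ← map_sub, LinearIsometryEquiv.norm_map]
  exact hK.norm_image_sub_le_of_norm_hasFDerivWithin_le
    (fun z _ => ((hU.fderiv_right (m := 1) le_rfl).differentiable one_ne_zero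
      z).hasFDerivAt.hasFDerivWithinAt)
    (fun z hz => (norm_fderiv_fderiv_eq U z).trans_le (hL z hz)) hy hx

theorem norm_gradient_sq_sub_le {U : E → ℝ} (hU : ContDiff ℝ 2 U) {a b w : E}
    {h κ T L G W δ ρ : ℝ} (hh : 0 ≤ h) (hκ : 1 / 2 ≤ κ) (hκT : κ ≤ T) (hρ0 : 0 ≤ ρ)
    (hba : b - a = h • (w - (h * κ) • gradient U a)) (hw : ‖w‖ ≤ W) (hδ : ‖b - a‖ ≤ δ)
    (hG : ∀ x ∈ segment ℝ a b, ‖gradient U x‖ ≤ G)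
    (hL : ∀ x ∈ segment ℝ a b, ‖iteratedFDeriv ℝ 2 U x‖ ≤ L)
    (hρ : ∀ x ∈ segment ℝ a b, ρ ≤ iteratedFDeriv ℝ 2 U x ![gradient U x, gradient U x]) :
    ‖gradient U b‖ ^ 2 - ‖gradient U a‖ ^ 2
      ≤ 2 * (h * L * G * W + 2 * h ^ 2 * T * L ^ 2 * G * δ) - h ^ 2 * ρ + (L * δ) ^ 2 := by
  set g := gradient U a
  have ha : a ∈ segment ℝ a b := left_mem_segment ℝ a b
  have hL0 : 0 ≤ L := (norm_nonneg _).trans (hL a ha)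
  have hlip : ∀ x ∈ segment ℝ a b, ‖gradient U x - g‖ ≤ L * δ := fun x hx =>
    (norm_gradient_sub_le hU (convex_segment a b) hL hx ha).trans
      (mul_le_mul_of_nonneg_left ((norm_sub_le_of_mem_segment hx).trans hδ) hL0)
  -- Along the segment the Hessian sees `b - a ≈ -h²κ ∇U a`, a direction of strict convexity.
  have hhess : ∀ x ∈ segment ℝ a b, fderiv ℝ (fderiv ℝ U) x (b - a) g
      ≤ h * L * G * W + 2 * h ^ 2 * T * L ^ 2 * G * δ - h ^ 2 * ρ / 2 := fun x hx => by
    have hρx : ρ ≤ fderiv ℝ (fderiv ℝ U) x (gradient U x) (gradient U x) := by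
      simpa [iteratedFDeriv_two_apply] using hρ x hx
    rw [hba]
    refine ((fderiv ℝ (fderiv ℝ U) x).apply_smul_sub_smul_le hh hκ hκT hρ0
      ((norm_fderiv_fderiv_eq U x).trans_le (hL x hx)) hw (hG a ha) (hG x hx) (hlip x hx)
      hρx).trans_eq (by ring)
  have hmvt : fderiv ℝ U b g - fderiv ℝ U a g
      ≤ h * L * G * W + 2 * h ^ 2 * T * L ^ 2 * G * δ - h ^ 2 * ρ / 2 :=
    sub_le_of_fderiv_apply_le (f := fun y => fderiv ℝ U y g)
      (f' := fun y => (fderiv ℝ (fderiv ℝ U) y).flip g)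
      (fun y _ => by
        simpa using ((hU.fderiv_right (m := 1) le_rfl).differentiable one_ne_zero
          y).hasFDerivAt.clm_apply (hasFDerivAt_const g y))
      (fun y hy => by simpa using hhess y hy)
  have hinner : inner ℝ g (gradient U b - g) = fderiv ℝ U b g - fderiv ℝ U a g := by
    rw [inner_sub_right, real_inner_comm, inner_gradient_left, inner_gradient_left]
  have hsq : ‖gradient U b - g‖ ^ 2 ≤ (L * δ) ^ 2 :=
    pow_le_pow_left₀ (norm_nonneg _) (hlip b (right_mem_segment ℝ a b)) 2
  have hsplit := norm_add_sq_real g (gradient U b - g)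
  rw [add_sub_cancel] at hsplit
  linarith

theorem norm_gradient_le_rpow {U : E → ℝ} (hU : ContDiff ℝ 2 U) {A s : ℝ} (hs : 0 < s)
    (hA : 0 ≤ A) (hD : ∀ y, ‖iteratedFDeriv ℝ 2 U y‖ ≤ A * (1 + ‖y‖) ^ (s - 1)) (x : E) :
    ‖gradient U x‖ ≤ (‖fderiv ℝ U 0‖ + A / s) * (1 + ‖x‖) ^ s := by
  rw [norm_gradient]
  exact norm_le_of_norm_fderiv_le_rpow hs hA
    (fun y => ((hU.fderiv_right (m := 1) le_rfl).differentiable one_ne_zero y).hasFDerivAt)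
    (fun y => (norm_fderiv_fderiv_eq U y).trans_le (hD y)) x

end Gradient

theorem rpow_le_rpow_abs_mul_rpow {x y c : ℝ} (hc : 1 ≤ c) (hy : 0 < y) (hxl : y / c ≤ x)
    (hxu : x ≤ c * y) (s : ℝ) : x ^ s ≤ c ^ |s| * y ^ s := by
  have hc0 : 0 < c := one_pos.trans_le hc
  have hxy : 0 < x / y := div_pos ((div_pos hy hc0).trans_le hxl) hy
  have hratio : (x / y) ^ s ≤ c ^ |s| := by
    rcases le_or_gt 0 s with hs | hs
    · rw [abs_of_nonneg hs]
      exact rpow_le_rpow hxy.le ((div_le_iff₀ hy).2 hxu) hs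
    · rw [abs_of_neg hs, rpow_neg hc0.le, ← inv_rpow hc0.le]
      refine rpow_le_rpow_of_nonpos (by positivity) ?_ hs.le
      rw [inv_eq_one_div, div_le_div_iff₀ hc0 hy, one_mul]
      exact (div_le_iff₀ hc0).1 hxl
  calc x ^ s = (x / y) ^ s * y ^ s := by
        rw [div_rpow (mul_pos hxy hy |>.le.trans_eq (div_mul_cancel₀ x hy.ne')) hy.le,
          div_mul_cancel₀ _ (rpow_pos_of_pos hy s).ne']
    _ ≤ c ^ |s| * y ^ s := mul_le_mul_of_nonneg_right hratio (by positivity)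

theorem isBigO_rpow_rpow_atTop {a b : ℝ} (h : a ≤ b) :
    (fun r : ℝ => r ^ a) =O[atTop] fun r => r ^ b := by
  refine Eventually.isBigO ?_
  filter_upwards [eventually_ge_atTop 1] with r hr
  rw [Real.norm_of_nonneg (by positivity)]
  exact rpow_le_rpow_of_exponent_le hr h

theorem isLittleO_rpow_rpow_atTop {a b : ℝ} (h : a < b) :
    (fun r : ℝ => r ^ a) =o[atTop] fun r => r ^ b := by
  have hlim : (fun r : ℝ => r ^ (a - b)) =o[atTop] fun _ => (1 : ℝ) := by
    simpa [neg_sub] using (isLittleO_one_iff ℝ).2 (tendsto_rpow_neg_atTop (sub_pos.2 h))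
  refine (hlim.mul_isBigO (isBigO_refl (fun r : ℝ => r ^ b) atTop)).congr' ?_ (by simp)
  filter_upwards [eventually_gt_atTop 0] with r hr
  rw [← rpow_add hr, sub_add_cancel]

section Ball

variable {E : Type*} [SeminormedAddCommGroup E] {q₀ x : E}

theorem norm_bounds_of_mem_closedBall_half (hx : x ∈ closedBall q₀ (‖q₀‖ / 2)) :
    ‖q₀‖ / 2 ≤ ‖x‖ ∧ ‖x‖ ≤ 3 / 2 * ‖q₀‖ := by
  rw [mem_closedBall, dist_eq_norm] at hx
  constructor <;> linarith [norm_sub_norm_le q₀ x, norm_sub_norm_le x q₀, norm_sub_rev x q₀]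

theorem le_mul_rpow_of_mem_closedBall_half {φ : E → ℝ} {A s : ℝ} (hA : 0 ≤ A)
    (hφ : ∀ y, φ y ≤ A * (1 + ‖y‖) ^ s) (hq₀ : 1 ≤ ‖q₀‖)
    (hx : x ∈ closedBall q₀ (‖q₀‖ / 2)) : φ x ≤ A * 3 ^ |s| * ‖q₀‖ ^ s := by
  obtain ⟨hxl, hxu⟩ := norm_bounds_of_mem_closedBall_half hx
  rw [mul_assoc]
  exact (hφ x).trans <| mul_le_mul_of_nonneg_left
    (rpow_le_rpow_abs_mul_rpow (by norm_num) (by linarith) (by linarith) (by linarith) s) hA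

theorem rpow_le_mul_norm_rpow_of_mem_closedBall_half (hq₀ : 0 < ‖q₀‖)
    (hx : x ∈ closedBall q₀ (‖q₀‖ / 2)) (s : ℝ) : ‖q₀‖ ^ s ≤ 3 ^ |s| * ‖x‖ ^ s := by
  obtain ⟨hxl, hxu⟩ := norm_bounds_of_mem_closedBall_half hx
  exact rpow_le_rpow_abs_mul_rpow (by norm_num) (by linarith) (by linarith) (by linarith) s

end Ball

section Leapfrog

variable {d : ℕ} {U : EuclideanSpace ℝ (Fin d) → ℝ} {h : ℝ}

def halfStepMomentum (U : EuclideanSpace ℝ (Fin d) → ℝ) (h : ℝ)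
    (x : EuclideanSpace ℝ (Fin d) × EuclideanSpace ℝ (Fin d)) : EuclideanSpace ℝ (Fin d) :=
  x.2 - (h / 2) • gradient U x.1

theorem leapfrog_fst (x : EuclideanSpace ℝ (Fin d) × EuclideanSpace ℝ (Fin d)) :
    (leapfrog U h x).1 = x.1 + h • halfStepMomentum U h x := rfl

theorem halfStepMomentum_leapfrog (x : EuclideanSpace ℝ (Fin d) × EuclideanSpace ℝ (Fin d)) :
    halfStepMomentum U h (leapfrog U h x)
      = halfStepMomentum U h x - h • gradient U (leapfrog U h x).1 := by
  simp only [halfStepMomentum, leapfrog]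
  module

theorem hamiltonian_leapfrog_sub (x : EuclideanSpace ℝ (Fin d) × EuclideanSpace ℝ (Fin d)) :
    hamiltonian U (leapfrog U h x) - hamiltonian U x
      = U (leapfrog U h x).1 - U x.1
          - (fderiv ℝ U x.1 ((leapfrog U h x).1 - x.1)
              + fderiv ℝ U (leapfrog U h x).1 ((leapfrog U h x).1 - x.1)) / 2
          + h ^ 2 / 8 * (‖gradient U (leapfrog U h x).1‖ ^ 2 - ‖gradient U x.1‖ ^ 2) := by
  set pHalf := halfStepMomentum U h x
  set q' := (leapfrog U h x).1
  have hq' : q' - x.1 = h • pHalf := by simp [q', pHalf, leapfrog_fst]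
  have hp : x.2 = pHalf + (h / 2) • gradient U x.1 := by simp [pHalf, halfStepMomentum]
  have hp' : (leapfrog U h x).2 = pHalf - (h / 2) • gradient U q' := rfl
  rw [hamiltonian, hamiltonian, hq', hp', hp, ← inner_gradient_left, ← inner_gradient_left,
    norm_add_sq_real, norm_sub_sq_real, inner_smul_right, inner_smul_right, inner_smul_right,
    inner_smul_right, norm_smul, norm_smul, real_inner_comm pHalf, real_inner_comm pHalf]
  simp only [Real.norm_eq_abs, mul_pow, sq_abs]
  ring

/-- The first term bounds the trapezoidal-rule error of one step, the rest bounds `h²/8` times the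
increase of `‖∇U‖²` once the decrease `h⁴ρ/8` is split off (see `hamiltonian_leapfrog_sub_le`). -/
def leapfrogEnergyError (h T L G M W δ : ℝ) : ℝ :=
  M * δ ^ 3 / 2 + h ^ 2 / 8 * (2 * (h * L * G * W + 2 * h ^ 2 * T * L ^ 2 * G * δ) + (L * δ) ^ 2)

theorem hamiltonian_leapfrog_sub_le (hU : ContDiff ℝ 3 U) {κ T L G M W δ ρ : ℝ} (hh : 0 ≤ h)
    (hκ : 1 / 2 ≤ κ) (hκT : κ ≤ T) (hρ0 : 0 ≤ ρ)
    {x : EuclideanSpace ℝ (Fin d) × EuclideanSpace ℝ (Fin d)} {w : EuclideanSpace ℝ (Fin d)}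
    (hw : halfStepMomentum U h x = w - (h * κ) • gradient U x.1) (hW : ‖w‖ ≤ W)
    (hδ : h * ‖halfStepMomentum U h x‖ ≤ δ)
    (hG : ∀ y ∈ segment ℝ x.1 (leapfrog U h x).1, ‖gradient U y‖ ≤ G)
    (hL : ∀ y ∈ segment ℝ x.1 (leapfrog U h x).1, ‖iteratedFDeriv ℝ 2 U y‖ ≤ L)
    (hM : ∀ y ∈ segment ℝ x.1 (leapfrog U h x).1, ‖iteratedFDeriv ℝ 3 U y‖ ≤ M)
    (hρ : ∀ y ∈ segment ℝ x.1 (leapfrog U h x).1,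
      ρ ≤ iteratedFDeriv ℝ 2 U y ![gradient U y, gradient U y]) :
    hamiltonian U (leapfrog U h x) - hamiltonian U x
      ≤ leapfrogEnergyError h T L G M W δ - h ^ 4 * ρ / 8 := by
  have hstep : (leapfrog U h x).1 - x.1 = h • halfStepMomentum U h x := by
    rw [leapfrog_fst, add_sub_cancel_left]
  have hnorm : ‖(leapfrog U h x).1 - x.1‖ ≤ δ := by
    rwa [hstep, norm_smul, Real.norm_of_nonneg hh]
  have htrap := abs_trapezoid_error_le_of_norm_iteratedFDeriv_le hU hM
  have hsq := norm_gradient_sq_sub_le (hU.of_le (by norm_num)) hh hκ hκT hρ0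
    (hstep.trans (by rw [hw])) hW hnorm hG hL hρ
  have hM0 : 0 ≤ M := (norm_nonneg _).trans (hM _ (left_mem_segment ℝ _ _))
  have hcube : M * ‖(leapfrog U h x).1 - x.1‖ ^ 3 ≤ M * δ ^ 3 :=
    mul_le_mul_of_nonneg_left (pow_le_pow_left₀ (norm_nonneg _) hnorm 3) hM0
  rw [hamiltonian_leapfrog_sub, leapfrogEnergyError]
  nlinarith [(abs_le.1 htrap).2, mul_le_mul_of_nonneg_left hsq (by positivity : 0 ≤ h ^ 2 / 8)]

theorem halfStepMomentum_leapfrog_add_smul (κ : ℝ)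
    (x : EuclideanSpace ℝ (Fin d) × EuclideanSpace ℝ (Fin d)) :
    halfStepMomentum U h (leapfrog U h x) + (h * (κ + 1)) • gradient U (leapfrog U h x).1
      = halfStepMomentum U h x + (h * κ) • gradient U x.1
        + (h * κ) • (gradient U (leapfrog U h x).1 - gradient U x.1) := by
  rw [halfStepMomentum_leapfrog]
  module

theorem leapfrog_iterate_bounds {q₀ p₀ : EuclideanSpace ℝ (Fin d)} {r G P δ : ℝ} {T : ℕ}
    (hh : 0 ≤ h) (hr : 0 ≤ r) (hG : ∀ y ∈ closedBall q₀ r, ‖gradient U y‖ ≤ G)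
    (hp₀ : ‖p₀‖ ≤ P) (hδ : h * (P + T * (h * G)) ≤ δ) (hTδ : T * δ ≤ r) :
    ∀ k ≤ T, ‖((leapfrog U h)^[k] (q₀, p₀)).1 - q₀‖ ≤ k * δ ∧
      ‖halfStepMomentum U h ((leapfrog U h)^[k] (q₀, p₀))‖ ≤ P + (k + 1) * (h * G) := by
  have hG0 : 0 ≤ h * G := mul_nonneg hh ((norm_nonneg _).trans (hG q₀ (mem_closedBall_self hr)))
  intro k
  induction k with
  | zero =>
    intro _
    refine ⟨by simp, ?_⟩
    simp only [Function.iterate_zero, id, halfStepMomentum, CharP.cast_eq_zero, zero_add,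
      one_mul]
    refine (norm_sub_le _ _).trans (add_le_add hp₀ ?_)
    rw [norm_smul, Real.norm_of_nonneg (by positivity)]
    nlinarith [norm_nonneg (gradient U q₀), hG q₀ (mem_closedBall_self hr)]
  | succ k ih =>
    intro hk
    obtain ⟨hq, hp⟩ := ih (Nat.le_of_succ_le hk)
    set x := (leapfrog U h)^[k] (q₀, p₀)
    have hk' : (k : ℝ) + 1 ≤ T := by exact_mod_cast hk
    have hstep : h * ‖halfStepMomentum U h x‖ ≤ δ := hδ.trans' <|
      mul_le_mul_of_nonneg_left (hp.trans (by gcongr)) hh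
    have hq' : ‖(leapfrog U h x).1 - q₀‖ ≤ (k + 1) * δ := by
      rw [leapfrog_fst, add_sub_right_comm]
      refine (norm_add_le _ _).trans ?_
      rw [norm_smul, Real.norm_of_nonneg hh]
      linarith
    have hmem : (leapfrog U h x).1 ∈ closedBall q₀ r := by
      rw [mem_closedBall, dist_eq_norm]
      have hδ0 : 0 ≤ δ := hδ.trans' (by have := (norm_nonneg p₀).trans hp₀; positivity)
      nlinarith
    rw [Function.iterate_succ_apply']
    refine ⟨by exact_mod_cast hq', ?_⟩
    rw [halfStepMomentum_leapfrog]
    refine (norm_sub_le _ _).trans ?_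
    rw [norm_smul, Real.norm_of_nonneg hh]
    push_cast
    nlinarith [mul_le_mul_of_nonneg_left (hG _ hmem) hh]

theorem leapfrog_iterate_step_bounds {q₀ p₀ : EuclideanSpace ℝ (Fin d)} {r G P δ : ℝ} {T : ℕ}
    (hh : 0 ≤ h) (hr : 0 ≤ r) (hG : ∀ y ∈ closedBall q₀ r, ‖gradient U y‖ ≤ G)
    (hp₀ : ‖p₀‖ ≤ P) (hδ : h * (P + T * (h * G)) ≤ δ) (hTδ : T * δ ≤ r) {k : ℕ} (hk : k < T) :
    ((leapfrog U h)^[k] (q₀, p₀)).1 ∈ closedBall q₀ r ∧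
      ((leapfrog U h)^[k + 1] (q₀, p₀)).1 ∈ closedBall q₀ r ∧
      h * ‖halfStepMomentum U h ((leapfrog U h)^[k] (q₀, p₀))‖ ≤ δ := by
  have hbounds := leapfrog_iterate_bounds hh hr hG hp₀ hδ hTδ
  have hG0 : 0 ≤ h * G := mul_nonneg hh ((norm_nonneg _).trans (hG q₀ (mem_closedBall_self hr)))
  have hδ0 : 0 ≤ δ := hδ.trans' (by have := (norm_nonneg p₀).trans hp₀; positivity)
  have hmem : ∀ j ≤ T, ((leapfrog U h)^[j] (q₀, p₀)).1 ∈ closedBall q₀ r := fun j hj => by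
    rw [mem_closedBall, dist_eq_norm]
    exact (hbounds j hj).1.trans (hTδ.trans' (by gcongr))
  refine ⟨hmem k hk.le, hmem (k + 1) hk, hδ.trans' (mul_le_mul_of_nonneg_left ?_ hh)⟩
  have hk' : (k : ℝ) + 1 ≤ T := by exact_mod_cast hk
  exact (hbounds k hk.le).2.trans (by gcongr)

theorem leapfrog_iterate_drift (hU : ContDiff ℝ 2 U) {q₀ p₀ : EuclideanSpace ℝ (Fin d)}
    {r G L P δ : ℝ} {T : ℕ} (hh : 0 ≤ h) (hr : 0 ≤ r)
    (hG : ∀ y ∈ closedBall q₀ r, ‖gradient U y‖ ≤ G)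
    (hL : ∀ y ∈ closedBall q₀ r, ‖iteratedFDeriv ℝ 2 U y‖ ≤ L)
    (hp₀ : ‖p₀‖ ≤ P) (hδ : h * (P + T * (h * G)) ≤ δ) (hTδ : T * δ ≤ r) :
    ∀ k ≤ T, ‖halfStepMomentum U h ((leapfrog U h)^[k] (q₀, p₀))
        + (h * (k + 1 / 2)) • gradient U ((leapfrog U h)^[k] (q₀, p₀)).1 - p₀‖
      ≤ k * (h * T * L * δ) := by
  intro k
  induction k with
  | zero =>
    intro _
    simp only [Function.iterate_zero, id, halfStepMomentum, CharP.cast_eq_zero, zero_add,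
      zero_mul]
    rw [norm_le_zero_iff]
    module
  | succ k ih =>
    intro hk
    obtain ⟨hxK, hx'K, hstep⟩ := leapfrog_iterate_step_bounds hh hr hG hp₀ hδ hTδ hk
    set x := (leapfrog U h)^[k] (q₀, p₀)
    rw [Function.iterate_succ_apply'] at hx'K ⊢
    have hκ : (0 : ℝ) ≤ h * (k + 1 / 2) := by positivity
    have hκT : h * (k + 1 / 2) ≤ h * T := by
      gcongr
      linarith [show (k : ℝ) + 1 ≤ T by exact_mod_cast hk]
    have hL0 : 0 ≤ L := (norm_nonneg _).trans (hL _ hxK)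
    have hlip : ‖gradient U (leapfrog U h x).1 - gradient U x.1‖ ≤ L * δ := by
      refine (norm_gradient_sub_le hU (convex_closedBall q₀ r) hL hx'K hxK).trans ?_
      rw [leapfrog_fst, add_sub_cancel_left, norm_smul, Real.norm_of_nonneg hh]
      exact mul_le_mul_of_nonneg_left hstep hL0
    have hid := halfStepMomentum_leapfrog_add_smul (U := U) (h := h) (k + 1 / 2) x
    rw [show ((k + 1 : ℕ) : ℝ) + 1 / 2 = k + 1 / 2 + 1 by push_cast; ring, hid,
      add_sub_right_comm]
    refine (norm_add_le _ _).trans ?_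
    rw [norm_smul, Real.norm_of_nonneg hκ]
    have := mul_le_mul hκT hlip (norm_nonneg _) (by positivity)
    push_cast
    nlinarith [ih (Nat.le_of_succ_le hk)]

theorem hamiltonian_iterate_leapfrog_le (hU : ContDiff ℝ 3 U) {q₀ p₀ : EuclideanSpace ℝ (Fin d)}
    {r G L M P W δ ρ : ℝ} {T : ℕ} (hh : 0 ≤ h) (hr : 0 ≤ r) (hρ0 : 0 ≤ ρ)
    (hG : ∀ y ∈ closedBall q₀ r, ‖gradient U y‖ ≤ G)
    (hL : ∀ y ∈ closedBall q₀ r, ‖iteratedFDeriv ℝ 2 U y‖ ≤ L)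
    (hM : ∀ y ∈ closedBall q₀ r, ‖iteratedFDeriv ℝ 3 U y‖ ≤ M)
    (hρ : ∀ y ∈ closedBall q₀ r, ρ ≤ iteratedFDeriv ℝ 2 U y ![gradient U y, gradient U y])
    (hp₀ : ‖p₀‖ ≤ P) (hδ : h * (P + T * (h * G)) ≤ δ) (hW : P + h * T ^ 2 * L * δ ≤ W)
    (hTδ : T * δ ≤ r) (herr : leapfrogEnergyError h T L G M W δ ≤ h ^ 4 * ρ / 8) :
    hamiltonian U ((leapfrog U h)^[T] (q₀, p₀)) ≤ hamiltonian U (q₀, p₀) := by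
  have hdecr : ∀ k < T, hamiltonian U ((leapfrog U h)^[k + 1] (q₀, p₀))
      ≤ hamiltonian U ((leapfrog U h)^[k] (q₀, p₀)) := by
    intro k hk
    obtain ⟨hxK, hx'K, hstep⟩ := leapfrog_iterate_step_bounds hh hr hG hp₀ hδ hTδ hk
    have hdrift := leapfrog_iterate_drift (hU.of_le (by norm_num)) hh hr hG hL hp₀ hδ hTδ k hk.le
    set x := (leapfrog U h)^[k] (q₀, p₀)
    rw [Function.iterate_succ_apply'] at hx'K ⊢
    have hseg := (convex_closedBall q₀ r).segment_subset hxK hx'K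
    have hk' : (k : ℝ) + 1 ≤ T := by exact_mod_cast hk
    have hw : ‖halfStepMomentum U h x + (h * (k + 1 / 2)) • gradient U x.1‖ ≤ W := by
      refine (norm_le_norm_add_norm_sub' _ p₀).trans (hW.trans' (add_le_add hp₀ ?_))
      have hL0 : 0 ≤ L := (norm_nonneg _).trans (hL _ hxK)
      have hδ0 : 0 ≤ δ := hstep.trans' (by positivity)
      have := mul_le_mul_of_nonneg_right (show (k : ℝ) ≤ T by linarith)
        (by positivity : 0 ≤ h * T * L * δ)
      nlinarith
    have hone := hamiltonian_leapfrog_sub_le hU (κ := k + 1 / 2) (T := T) hh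
      (by linarith [k.cast_nonneg (α := ℝ)]) (by linarith) hρ0 (add_sub_cancel_right _ _).symm hw
      hstep (fun y hy => hG y (hseg hy)) (fun y hy => hL y (hseg hy))
      (fun y hy => hM y (hseg hy)) (fun y hy => hρ y (hseg hy))
    linarith
  have htele := Finset.sum_range_sub (fun k => hamiltonian U ((leapfrog U h)^[k] (q₀, p₀))) T
  have hsum := Finset.sum_nonpos (s := Finset.range T) (f := fun k =>
    hamiltonian U ((leapfrog U h)^[k + 1] (q₀, p₀)) - hamiltonian U ((leapfrog U h)^[k] (q₀, p₀)))
    (fun k hk => sub_nonpos.2 (hdecr k (Finset.mem_range.1 hk)))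
  simp only [Function.iterate_zero, id] at htele
  linarith

end Leapfrog

theorem isLittleO_leapfrogEnergyError {m β h T : ℝ} (hm : m < 2) (hβ : β < m - 1)
    {L G M W δ : ℝ → ℝ} (hL : L =O[atTop] fun r => r ^ (m - 2))
    (hG : G =O[atTop] fun r => r ^ (m - 1)) (hM : M =O[atTop] fun r => r ^ (m - 3))
    (hW : W =O[atTop] fun r => r ^ β) (hδ : δ =O[atTop] fun r => r ^ (m - 1)) :
    (fun r => leapfrogEnergyError h T (L r) (G r) (M r) (W r) (δ r))
      =o[atTop] fun r => r ^ (3 * m - 4) := by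
  set c := max (4 * m - 6) (2 * m - 3 + β)
  have h₄ : 4 * m - 6 ≤ c := le_max_left _ _
  have h₂ : 2 * m - 3 + β ≤ c := le_max_right _ _
  have mulO : ∀ {f g : ℝ → ℝ} {a b e : ℝ}, (f =O[atTop] fun r => r ^ a) →
      (g =O[atTop] fun r => r ^ b) → a + b ≤ e → (f * g) =O[atTop] fun r => r ^ e :=
    fun hf hg hab => hf.mul_atTop_rpow_of_isBigO_rpow _ _ _ hg hab
  have hMδ : (M * (δ * (δ * δ))) =O[atTop] fun r => r ^ c :=
    mulO hM (mulO hδ (mulO hδ hδ le_rfl) le_rfl) (by linarith)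
  have hLGW : (L * G * W) =O[atTop] fun r => r ^ c :=
    mulO (mulO hL hG le_rfl) hW (by linarith)
  have hLLGδ : (L * L * G * δ) =O[atTop] fun r => r ^ c :=
    mulO (mulO (mulO hL hL le_rfl) hG le_rfl) hδ (by linarith)
  have hLδLδ : (L * δ * (L * δ)) =O[atTop] fun r => r ^ c :=
    mulO (mulO hL hδ le_rfl) (mulO hL hδ le_rfl) (by linarith)
  have hE := (((hMδ.const_mul_left (1 / 2)).add (hLGW.const_mul_left (h ^ 3 / 4))).add
    (hLLGδ.const_mul_left (h ^ 4 * T / 2))).add (hLδLδ.const_mul_left (h ^ 2 / 8))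
  refine (hE.congr_left fun r => ?_).trans_isLittleO (isLittleO_rpow_rpow_atTop ?_)
  · simp only [leapfrogEnergyError, Pi.mul_apply]
    ring
  · simp only [c, max_lt_iff]
    constructor <;> linarith

theorem eventually_leapfrog_conditions {m γ h cG cL cM cρ : ℝ} {T : ℕ} (hm : m < 2)
    (hγ : γ < m - 1) (hh : 0 < h) (hcρ : 0 < cρ) :
    ∀ᶠ r in atTop,
      T * (h * (r ^ γ + T * (h * (cG * r ^ (m - 1))))) ≤ r / 2 ∧
      leapfrogEnergyError h T (cL * r ^ (m - 2)) (cG * r ^ (m - 1)) (cM * r ^ (m - 3))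
        (r ^ γ + h * T ^ 2 * (cL * r ^ (m - 2)) * (h * (r ^ γ + T * (h * (cG * r ^ (m - 1))))))
        (h * (r ^ γ + T * (h * (cG * r ^ (m - 1))))) ≤ h ^ 4 * (cρ * r ^ (3 * m - 4)) / 8 := by
  have hpow : ∀ c a : ℝ, (fun r : ℝ => c * r ^ a) =O[atTop] fun r => r ^ a :=
    fun c a => (isBigO_refl _ _).const_mul_left c
  have hδ : (fun r : ℝ => h * (r ^ γ + T * (h * (cG * r ^ (m - 1)))))
      =O[atTop] fun r => r ^ (m - 1) :=
    ((isBigO_rpow_rpow_atTop hγ.le).add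
      (((hpow cG (m - 1)).const_mul_left h).const_mul_left T)).const_mul_left h
  have hW : (fun r : ℝ => r ^ γ + h * T ^ 2 * (cL * r ^ (m - 2))
      * (h * (r ^ γ + T * (h * (cG * r ^ (m - 1)))))) =O[atTop] fun r => r ^ max γ (2 * m - 3) :=
    (isBigO_rpow_rpow_atTop (le_max_left _ _)).add <|
      ((hpow cL (m - 2)).const_mul_left (h * T ^ 2)).mul_atTop_rpow_of_isBigO_rpow _ _ _ hδ
        (by linarith [le_max_right γ (2 * m - 3)])
  have herr := isLittleO_leapfrogEnergyError (T := T) (h := h) hm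
    (max_lt hγ (by linarith)) (hpow cL _) (hpow cG _) (hpow cM _) hW hδ
  have hTδ := (hδ.const_mul_left (T : ℝ)).trans_isLittleO
    (isLittleO_rpow_rpow_atTop (show m - 1 < 1 by linarith))
  filter_upwards [hTδ.bound (show (0 : ℝ) < 1 / 2 by norm_num),
    herr.bound (show 0 < h ^ 4 * cρ / 8 by positivity), eventually_gt_atTop 0] with r h₁ h₂ hr
  simp only [Real.norm_eq_abs, rpow_one, abs_of_pos hr, abs_of_pos (rpow_pos_of_pos hr _)] at h₁ h₂
  exact ⟨(le_abs_self _).trans (h₁.trans_eq (by ring)),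
    (le_abs_self _).trans (h₂.trans_eq (by ring))⟩

theorem hmc_hamiltonian_decreases_subquadratic_general {d : ℕ}
    (U : EuclideanSpace ℝ (Fin d) → ℝ) (m : ℝ) (hm : m ∈ Set.Ioo (1 : ℝ) 2)
    (hU : ContDiff ℝ 3 U)
    (A₁ : ℝ) (hA₁ : 0 ≤ A₁)
    (hD : ∀ q : EuclideanSpace ℝ (Fin d),
      ‖iteratedFDeriv ℝ 2 U q‖ ≤ A₁ * (1 + ‖q‖) ^ (m - 2) ∧
      ‖iteratedFDeriv ℝ 3 U q‖ ≤ A₁ * (1 + ‖q‖) ^ (m - 3))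
    (A₂ : ℝ) (hA₂ : 0 < A₂) (R : ℝ)
    (hhess : ∀ q : EuclideanSpace ℝ (Fin d), R ≤ ‖q‖ →
      A₂ * ‖q‖ ^ (3 * m - 4) ≤
        iteratedFDeriv ℝ 2 U q ![gradient U q, gradient U q])
    (T : ℕ) (γ : ℝ) (hγ : γ ∈ Set.Ico (0 : ℝ) (m - 1))
    (h : ℝ) (hh : 0 < h) :
    ∃ R_H ≥ (0 : ℝ), ∀ q₀ p₀ : EuclideanSpace ℝ (Fin d),
      R_H ≤ ‖q₀‖ → ‖p₀‖ ≤ ‖q₀‖ ^ γ →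
      hamiltonian U ((leapfrog U h)^[T] (q₀, p₀)) ≤ hamiltonian U (q₀, p₀) := by
  obtain ⟨hm1, hm2⟩ := hm
  set Cg := ‖fderiv ℝ U 0‖ + A₁ / (m - 1)
  have hgrad := norm_gradient_le_rpow (hU.of_le (by norm_num)) (sub_pos.2 hm1) hA₁
    (fun y => by rw [show m - 1 - 1 = m - 2 by ring]; exact (hD y).1)
  -- On the ball of radius `‖q₀‖ / 2` about `q₀`, both `‖x‖` and `1 + ‖x‖` are within a factor `3`
  -- of `‖q₀‖`, whence the constants `3 ^ |s|`.
  have hev := eventually_leapfrog_conditions (T := T) (cG := Cg * 3 ^ |m - 1|)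
    (cL := A₁ * 3 ^ |m - 2|) (cM := A₁ * 3 ^ |m - 3|) hm2 hγ.2 hh
    (show 0 < A₂ / 3 ^ |3 * m - 4| by positivity)
  obtain ⟨R₀, hR₀⟩ := eventually_atTop.1 (hev.and (eventually_ge_atTop (max 1 (2 * R))))
  refine ⟨max R₀ 0, le_max_right _ _, fun q₀ p₀ hq₀ hp₀ => ?_⟩
  obtain ⟨⟨hTδ, herr⟩, hq₀R⟩ := hR₀ ‖q₀‖ (le_of_max_le_left hq₀)
  have h1 : 1 ≤ ‖q₀‖ := (le_max_left _ _).trans hq₀R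
  have hCg : 0 ≤ Cg := add_nonneg (norm_nonneg _) (div_nonneg hA₁ (by linarith))
  refine hamiltonian_iterate_leapfrog_le hU hh.le (r := ‖q₀‖ / 2) (by positivity) (by positivity)
    (fun x hx => le_mul_rpow_of_mem_closedBall_half (φ := fun y => ‖gradient U y‖) hCg hgrad h1 hx)
    (fun x hx => le_mul_rpow_of_mem_closedBall_half (φ := fun y => ‖iteratedFDeriv ℝ 2 U y‖)
      hA₁ (fun y => (hD y).1) h1 hx)
    (fun x hx => le_mul_rpow_of_mem_closedBall_half (φ := fun y => ‖iteratedFDeriv ℝ 3 U y‖)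
      hA₁ (fun y => (hD y).2) h1 hx)
    (fun x hx => ?_) hp₀ le_rfl le_rfl hTδ herr
  have hxR : R ≤ ‖x‖ := by
    linarith [(norm_bounds_of_mem_closedBall_half hx).1, (le_max_right _ _).trans hq₀R]
  have hcmp := rpow_le_mul_norm_rpow_of_mem_closedBall_half (by linarith) hx (3 * m - 4)
  refine (hhess x hxR).trans' ?_
  rw [div_mul_eq_mul_div, div_le_iff₀ (by positivity), mul_assoc, mul_comm (‖x‖ ^ _)]
  exact mul_le_mul_of_nonneg_left hcmp hA₂.le

/-- under A2(m)(i)–(ii) with `m ∈ (1,2)`, for every `h > 0` the Hamiltonian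
does not increase along `T` leapfrog steps, provided the starting position is far enough
from the origin and the momentum satisfies `‖p₀‖ ≤ ‖q₀‖^γ`. -/
theorem hmc_hamiltonian_decreases_subquadratic {d : ℕ}
    (U : EuclideanSpace ℝ (Fin d) → ℝ) (m : ℝ) (hm : m ∈ Set.Ioo (1 : ℝ) 2)
    (hU : ContDiff ℝ 3 U)
    (A₁ : ℝ) (hA₁ : 0 ≤ A₁)
    (hD : ∀ q : EuclideanSpace ℝ (Fin d),
      ‖iteratedFDeriv ℝ 2 U q‖ ≤ A₁ * (1 + ‖q‖) ^ (m - 2) ∧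
      ‖iteratedFDeriv ℝ 3 U q‖ ≤ A₁ * (1 + ‖q‖) ^ (m - 3))
    (A₂ : ℝ) (hA₂ : 0 < A₂) (R : ℝ) (hR : 0 ≤ R)
    (hhess : ∀ q : EuclideanSpace ℝ (Fin d), R ≤ ‖q‖ →
      A₂ * ‖q‖ ^ (3 * m - 4) ≤
        iteratedFDeriv ℝ 2 U q ![gradient U q, gradient U q])
    (T : ℕ) (hT : 1 ≤ T) (γ : ℝ) (hγ : γ ∈ Set.Ico (0 : ℝ) (m - 1))
    (h : ℝ) (hh : 0 < h) :
    ∃ R_H ≥ (0 : ℝ), ∀ q₀ p₀ : EuclideanSpace ℝ (Fin d),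
      R_H ≤ ‖q₀‖ → ‖p₀‖ ≤ ‖q₀‖ ^ γ →
      hamiltonian U ((leapfrog U h)^[T] (q₀, p₀)) ≤ hamiltonian U (q₀, p₀) :=
  hmc_hamiltonian_decreases_subquadratic_general U m hm hU A₁ hA₁ hD A₂ hA₂ R hhess T γ hγ h hh
end
end

section
/- Let f : ℝ^d × ℝ^d → ℝ^d be Borel measurable, φ : ℝ^d → [0,∞) a probability density with respect to Lebesgue measure, and define the Markov kernel K(x,A) = ∫ 1_A(f(x,z)) φ(z) dz. Let R, M > 0 and y₀ ∈ ℝ^d. Suppose: (i) there exists L > 0 such that for all x with ‖x‖ ≤ R, the map f_x = f(x,·) is L-Lipschitz; (ii) there exists M̃ > 0 such that for all x with ‖x‖ ≤ R, the ball B(y₀,M) is contained in f_x(B(0,M̃)); and (iii) φ is lower semicontinuous and positive on ℝ^d. Then for all x with ‖x‖ ≤ R and all Borel sets A ⊆ ℝ^d: K(x,A) ≥ L^{−d} · inf_{z ∈ closed ball B(0,M̃)} φ(z) · Leb(A ∩ B(y₀,M)). -/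
open Real MeasureTheory
noncomputable section

/-- The volume of the image of a set under a Lipschitz map on Euclidean space is bounded
by the Lipschitz constant to the power `d` times the volume of the set. -/
lemma lipschitz_image_volume_le {d : ℕ}
    {g : EuclideanSpace ℝ (Fin d) → EuclideanSpace ℝ (Fin d)} {K : NNReal}
    (hg : LipschitzWith K g) (s : Set (EuclideanSpace ℝ (Fin d))) :
    volume (g '' s) ≤ (K : ENNReal) ^ (d : ℕ) * volume s := by
  have hfin : ((Module.finrank ℝ (EuclideanSpace ℝ (Fin d)) : ℕ) : ℝ) = (d : ℝ) := by
    rw [finrank_euclideanSpace_fin]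
  haveI hHaar : Measure.IsAddHaarMeasure
      (μH[(d : ℝ)] : Measure (EuclideanSpace ℝ (Fin d))) := by
    rw [← hfin]; infer_instance
  set c := Measure.addHaarScalarFactor
    (μH[(d : ℝ)] : Measure (EuclideanSpace ℝ (Fin d))) volume with hc
  have heq : (μH[(d : ℝ)] : Measure (EuclideanSpace ℝ (Fin d))) = c • volume :=
    Measure.isAddLeftInvariant_eq_smul _ _
  have hc_pos : 0 < c := Measure.addHaarScalarFactor_pos_of_isAddHaarMeasure _ _
  have hc0 : (c : ENNReal) ≠ 0 := by exact_mod_cast hc_pos.ne'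
  have hctop : (c : ENNReal) ≠ ⊤ := ENNReal.coe_ne_top
  have himg : μH[(d : ℝ)] (g '' s) ≤ (K : ENNReal) ^ (d : ℝ) * μH[(d : ℝ)] s :=
    hg.hausdorffMeasure_image_le (Nat.cast_nonneg d) s
  rw [heq, Measure.smul_apply, Measure.smul_apply, ENNReal.smul_def, ENNReal.smul_def,
    smul_eq_mul, smul_eq_mul] at himg
  have h : (K : ENNReal) ^ (d : ℝ) * ((c : ENNReal) * volume s)
      = (c : ENNReal) * ((K : ENNReal) ^ (d : ℝ) * volume s) := by ring
  rw [h] at himg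
  have hle : volume (g '' s) ≤ (K : ENNReal) ^ (d : ℝ) * volume s :=
    (ENNReal.mul_le_mul_iff_right hc0 hctop).mp himg
  rwa [← ENNReal.rpow_natCast]

/-- minorization for an iterative Markov kernel
`K(x,A) = ∫ 1_A(f(x,z)) φ(z) dz`: on the ball `B(0,R)` the kernel is bounded below by
a multiple of the Lebesgue measure restricted to `B(y₀,M)`. -/
theorem iterative_kernel_small_set {d : ℕ}
    (f : EuclideanSpace ℝ (Fin d) → EuclideanSpace ℝ (Fin d) → EuclideanSpace ℝ (Fin d))
    (hf : Measurable (Function.uncurry f))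
    (φ : EuclideanSpace ℝ (Fin d) → ℝ) (hφ_nonneg : ∀ z, 0 ≤ φ z)
    (hφ_prob : ∫ z, φ z = 1)
    (hφ_lsc : LowerSemicontinuous φ) (hφ_pos : ∀ z, 0 < φ z)
    (R M : ℝ) (hR : 0 < R) (hM : 0 < M) (y₀ : EuclideanSpace ℝ (Fin d))
    (L : ℝ) (hL : 0 < L)
    (hLip : ∀ x : EuclideanSpace ℝ (Fin d), ‖x‖ ≤ R →
      ∀ z₁ z₂ : EuclideanSpace ℝ (Fin d), ‖f x z₁ - f x z₂‖ ≤ L * ‖z₁ - z₂‖)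
    (Mt : ℝ) (hMt : 0 < Mt)
    (hcover : ∀ x : EuclideanSpace ℝ (Fin d), ‖x‖ ≤ R →
      Metric.ball y₀ M ⊆ f x '' Metric.ball (0 : EuclideanSpace ℝ (Fin d)) Mt) :
    ∀ x : EuclideanSpace ℝ (Fin d), ‖x‖ ≤ R →
      ∀ A : Set (EuclideanSpace ℝ (Fin d)), MeasurableSet A →
        ENNReal.ofReal
            (L ^ (-(d : ℝ)) * sInf ((fun z => φ z) '' (Metric.closedBall (0 : EuclideanSpace ℝ (Fin d)) Mt))) *
            volume (A ∩ Metric.ball y₀ M) ≤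
          ∫⁻ z, A.indicator (fun _ => (1 : ENNReal)) (f x z) * ENNReal.ofReal (φ z) := by
  intro x hx A hA
  set c₀ : ℝ := sInf ((fun z => φ z) '' (Metric.closedBall (0 : EuclideanSpace ℝ (Fin d)) Mt)) with hc₀
  have hc₀_nonneg : 0 ≤ c₀ :=
    Real.sInf_nonneg (by rintro _ ⟨z, _, rfl⟩; exact hφ_nonneg z)
  have h_inf_le : ∀ z ∈ Metric.closedBall (0 : EuclideanSpace ℝ (Fin d)) Mt, c₀ ≤ φ z := by
    intro z hz
    exact csInf_le ⟨0, by rintro _ ⟨w, _, rfl⟩; exact hφ_nonneg w⟩ ⟨z, hz, rfl⟩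
  -- the map `f x` and its properties
  have hg_meas : Measurable (f x) := hf.comp measurable_prodMk_left
  have hg_lip : LipschitzWith L.toNNReal (f x) := by
    refine LipschitzWith.of_dist_le_mul fun z₁ z₂ => ?_
    rw [dist_eq_norm, dist_eq_norm, Real.coe_toNNReal _ hL.le]
    exact hLip x hx z₁ z₂
  set S : Set (EuclideanSpace ℝ (Fin d)) := A ∩ Metric.ball y₀ M with hS
  set T : Set (EuclideanSpace ℝ (Fin d)) :=
    f x ⁻¹' S ∩ Metric.ball (0 : EuclideanSpace ℝ (Fin d)) Mt with hT
  have hT_meas : MeasurableSet T :=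
    (hg_meas (hA.inter measurableSet_ball)).inter measurableSet_ball
  -- S is covered by the image of T
  have hS_sub : S ⊆ f x '' T := by
    rintro y ⟨hyA, hyM⟩
    obtain ⟨z, hz, hzeq⟩ := hcover x hx hyM
    exact ⟨z, ⟨by rw [Set.mem_preimage, hzeq]; exact ⟨hyA, hyM⟩, hz⟩, hzeq⟩
  -- volume comparison via Lipschitz image
  have h1 : volume S ≤ ENNReal.ofReal (L ^ d) * volume T := by
    calc volume S ≤ volume (f x '' T) := measure_mono hS_sub
      _ ≤ (L.toNNReal : ENNReal) ^ (d : ℕ) * volume T := lipschitz_image_volume_le hg_lip T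
      _ = ENNReal.ofReal (L ^ d) * volume T := by
          rw [ENNReal.ofReal_pow hL.le]; rfl
  -- lower bound of the integral by the integral over T
  have h2 : ENNReal.ofReal c₀ * volume T ≤
      ∫⁻ z, A.indicator (fun _ => (1 : ENNReal)) (f x z) * ENNReal.ofReal (φ z) := by
    have key : ∀ z ∈ T, ENNReal.ofReal c₀ ≤
        A.indicator (fun _ => (1 : ENNReal)) (f x z) * ENNReal.ofReal (φ z) := by
      intro z hz
      have hzA : f x z ∈ A := hz.1.1
      rw [Set.indicator_of_mem hzA, one_mul]
      exact ENNReal.ofReal_le_ofReal (h_inf_le z (Metric.ball_subset_closedBall hz.2))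
    calc ENNReal.ofReal c₀ * volume T
        = ∫⁻ _ in T, ENNReal.ofReal c₀ := (setLIntegral_const _ _).symm
      _ ≤ ∫⁻ z in T, A.indicator (fun _ => (1 : ENNReal)) (f x z) * ENNReal.ofReal (φ z) :=
          setLIntegral_mono' hT_meas key
      _ ≤ ∫⁻ z, A.indicator (fun _ => (1 : ENNReal)) (f x z) * ENNReal.ofReal (φ z) :=
          setLIntegral_le_lintegral _ _
  -- arithmetic to combine
  set P : ENNReal := ENNReal.ofReal (L ^ d) with hP
  have hP0 : P ≠ 0 := by
    simp [hP, ENNReal.ofReal_eq_zero, not_le, pow_pos hL]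
  have hPtop : P ≠ ⊤ := ENNReal.ofReal_ne_top
  have hLHS : ENNReal.ofReal (L ^ (-(d : ℝ)) * c₀) = P⁻¹ * ENNReal.ofReal c₀ := by
    have hrpow : L ^ (-(d : ℝ)) = (L ^ d)⁻¹ := by
      rw [Real.rpow_neg hL.le, Real.rpow_natCast]
    rw [hrpow, ENNReal.ofReal_mul (inv_nonneg.mpr (pow_pos hL d).le),
      ENNReal.ofReal_inv_of_pos (pow_pos hL d)]
  calc ENNReal.ofReal (L ^ (-(d : ℝ)) * c₀) * volume S
      = P⁻¹ * ENNReal.ofReal c₀ * volume S := by rw [hLHS]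
    _ ≤ P⁻¹ * ENNReal.ofReal c₀ * (P * volume T) := by
        rw [mul_assoc, mul_assoc]
        exact mul_le_mul_right (mul_le_mul_right h1 _) _
    _ = P⁻¹ * P * (ENNReal.ofReal c₀ * volume T) := by ring
    _ = ENNReal.ofReal c₀ * volume T := by
        rw [ENNReal.inv_mul_cancel hP0 hPtop, one_mul]
    _ ≤ _ := h2
end
end

section
/- Let m ∈ (1,2] and assume U satisfies A2(m)(i), i.e., U ∈ C³(ℝ^d) and there is A₁ ≥ 0 with ‖D^k U(q)‖ ≤ A₁(1 + ‖q‖)^{m−k} for k = 2,3 and all q. Then there exists C ≥ 0 such that for all q, x ∈ ℝ^d: ‖∇U(q) − ∇U(x)‖ ≤ C min(‖q − x‖, ‖q − x‖^{m−1}). -/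
/-!
Write `p = m - 1 ∈ (0, 1]` and `F = DU`, so that `‖DF y‖ ≤ A (1 + ‖y‖) ^ (p - 1) ≤ A` and
`F` is `A`-Lipschitz. For the Hölder bound at distance `r = ‖q - x‖`: if an endpoint has norm
at least `2r`, the segment `[x, q]` stays at norm `≥ r`, where `‖DF‖ ≤ A r ^ (p - 1)`, so
`‖F q - F x‖ ≤ A r ^ p`. Otherwise both endpoints lie in the ball of radius `2r` about `0`, and
integrating `DF` along rays from the origin gives
`‖F y - F 0‖ ≤ A / p ((1 + ‖y‖) ^ p - 1) ≤ A / p ‖y‖ ^ p`,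
the last step by subadditivity of `t ↦ t ^ p`.
-/

open Real

section

variable {E G : Type*} [NormedAddCommGroup E] [NormedSpace ℝ E]
  [NormedAddCommGroup G] [NormedSpace ℝ G] {f : E → G} {A p : ℝ}

theorem norm_image_sub_image_zero_le_rpow (hf : Differentiable ℝ f) (hA : 0 ≤ A) (hp : 0 < p)
    (hp1 : p ≤ 1) (hbound : ∀ y, ‖fderiv ℝ f y‖ ≤ A * (1 + ‖y‖) ^ (p - 1)) (y : E) :
    ‖f y - f 0‖ ≤ A / p * ‖y‖ ^ p := by
  set a := ‖y‖
  have ha : 0 ≤ a := norm_nonneg y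
  have hpos : ∀ t : ℝ, 0 ≤ t → 0 < 1 + t * a := fun t ht => by positivity
  have hB : ∀ t : ℝ, 0 ≤ t → HasDerivAt (fun t => A / p * ((1 + t * a) ^ p - 1))
      (A * (1 + t * a) ^ (p - 1) * a) t := fun t ht => by
    have h := ((((hasDerivAt_id' t).mul_const a).const_add 1).rpow_const (p := p)
      (Or.inl (hpos t ht).ne')).sub_const 1 |>.const_mul (A / p)
    exact h.congr_deriv (by field_simp)
  have hray : ‖f ((1 : ℝ) • y) - f 0‖ ≤ A / p * ((1 + 1 * a) ^ p - 1) := by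
    refine image_norm_le_of_norm_deriv_right_le_deriv_boundary'
      (f := fun t : ℝ => f (t • y) - f 0) (f' := fun t => fderiv ℝ f (t • y) y)
      ((hf.continuous.comp (continuous_id.smul continuous_const)).sub
        continuous_const).continuousOn
      (fun t _ => ?_) (by simp) ?_ (fun t ht => (hB t ht.1).hasDerivWithinAt) (fun t ht => ?_)
      ⟨zero_le_one, le_rfl⟩
    · exact ((hf _).hasFDerivAt.comp_hasDerivAt t
        (by simpa using (hasDerivAt_id t).smul_const y)).sub_const (f 0) |>.hasDerivWithinAt
    · exact fun t ht => (hB t ht.1).continuousAt.continuousWithinAt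
    · have hnorm : ‖t • y‖ = t * a := by rw [norm_smul, norm_of_nonneg ht.1]
      calc ‖fderiv ℝ f (t • y) y‖ ≤ ‖fderiv ℝ f (t • y)‖ * a := (fderiv ℝ f (t • y)).le_opNorm y
        _ ≤ A * (1 + t * a) ^ (p - 1) * a := by
          gcongr
          simpa [hnorm] using hbound (t • y)
  have hsub : (1 + a) ^ p - 1 ≤ a ^ p := by
    linarith [rpow_add_le_add_rpow zero_le_one ha hp.le hp1, one_rpow p]
  calc ‖f y - f 0‖ ≤ A / p * ((1 + a) ^ p - 1) := by simpa using hray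
    _ ≤ A / p * a ^ p := by gcongr

theorem norm_image_sub_le_of_forall_le_one_add_norm (hf : Differentiable ℝ f) (hA : 0 ≤ A)
    (hp1 : p ≤ 1) (hbound : ∀ y, ‖fderiv ℝ f y‖ ≤ A * (1 + ‖y‖) ^ (p - 1)) {R : ℝ} (hR : 0 < R)
    {q x : E} (hseg : ∀ y ∈ segment ℝ x q, R ≤ 1 + ‖y‖) :
    ‖f q - f x‖ ≤ A * R ^ (p - 1) * ‖q - x‖ := by
  refine (convex_segment x q).norm_image_sub_le_of_norm_fderiv_le (fun y _ => hf y)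
    (fun y hy => (hbound y).trans ?_) (left_mem_segment ℝ x q) (right_mem_segment ℝ x q)
  exact mul_le_mul_of_nonneg_left (rpow_le_rpow_of_nonpos hR (hseg y hy) (by linarith)) hA

theorem norm_image_sub_le_rpow (hf : Differentiable ℝ f) (hA : 0 ≤ A) (hp : 0 < p) (hp1 : p ≤ 1)
    (hbound : ∀ y, ‖fderiv ℝ f y‖ ≤ A * (1 + ‖y‖) ^ (p - 1)) (q x : E) :
    ‖f q - f x‖ ≤ A * (1 + 4 / p) * ‖q - x‖ ^ p := by
  set r := ‖q - x‖
  have hC : A ≤ A * (1 + 4 / p) :=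
    le_mul_of_one_le_right hA (le_add_of_nonneg_right (by positivity))
  rcases (norm_nonneg (q - x)).eq_or_lt with hr | hr
  · obtain rfl : q = x := sub_eq_zero.1 (norm_eq_zero.1 hr.symm)
    simp only [sub_self, norm_zero]
    positivity
  have hfar : ∀ {a b : E}, ‖a - b‖ = r → 2 * r ≤ ‖b‖ → ‖f a - f b‖ ≤ A * r ^ p := by
    intro a b hab hb
    have hseg : ∀ y ∈ segment ℝ b a, r ≤ 1 + ‖y‖ := fun y hy => by
      linarith [norm_sub_le_of_mem_segment hy, norm_sub_norm_le b y, norm_sub_rev b y,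
        norm_nonneg y]
    calc ‖f a - f b‖ ≤ A * r ^ (p - 1) * ‖a - b‖ :=
          norm_image_sub_le_of_forall_le_one_add_norm hf hA hp1 hbound hr hseg
      _ = A * r ^ p := by rw [hab, mul_assoc, ← rpow_add_one hr.ne', sub_add_cancel]
  rcases le_or_gt (2 * r) ‖x‖ with hx | hx
  · exact (hfar rfl hx).trans (mul_le_mul_of_nonneg_right hC (rpow_nonneg hr.le p))
  rcases le_or_gt (2 * r) ‖q‖ with hq | hq
  · rw [norm_sub_rev (f q)]
    exact (hfar (norm_sub_rev x q) hq).trans (mul_le_mul_of_nonneg_right hC (rpow_nonneg hr.le p))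
  have hball : ∀ y : E, ‖y‖ < 2 * r → ‖f y - f 0‖ ≤ 2 * A / p * r ^ p := fun y hy => by
    calc ‖f y - f 0‖ ≤ A / p * ‖y‖ ^ p :=
          norm_image_sub_image_zero_le_rpow hf hA hp hp1 hbound y
      _ ≤ A / p * (2 ^ p * r ^ p) := by
        rw [← mul_rpow zero_le_two hr.le]; gcongr
      _ ≤ A / p * (2 * r ^ p) := by
        gcongr; simpa using rpow_le_rpow_of_exponent_le one_le_two hp1
      _ = 2 * A / p * r ^ p := by ring
  calc ‖f q - f x‖ ≤ ‖f q - f 0‖ + ‖f x - f 0‖ := by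
        simpa only [dist_eq_norm] using dist_triangle_right (f q) (f x) (f 0)
    _ ≤ 2 * A / p * r ^ p + 2 * A / p * r ^ p := add_le_add (hball q hq) (hball x hx)
    _ = 4 * A / p * r ^ p := by ring
    _ ≤ A * r ^ p + 4 * A / p * r ^ p := le_add_of_nonneg_left (by positivity)
    _ = A * (1 + 4 / p) * r ^ p := by ring

theorem norm_image_sub_le_mul_min (hf : Differentiable ℝ f) (hA : 0 ≤ A) (hp : 0 < p) (hp1 : p ≤ 1)
    (hbound : ∀ y, ‖fderiv ℝ f y‖ ≤ A * (1 + ‖y‖) ^ (p - 1)) (q x : E) :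
    ‖f q - f x‖ ≤ A * (1 + 4 / p) * min ‖q - x‖ (‖q - x‖ ^ p) := by
  have hC : A ≤ A * (1 + 4 / p) :=
    le_mul_of_one_le_right hA (le_add_of_nonneg_right (by positivity))
  have hlip : ‖f q - f x‖ ≤ A * ‖q - x‖ := by
    simpa using norm_image_sub_le_of_forall_le_one_add_norm hf hA hp1 hbound one_pos
      (q := q) (x := x) fun y _ => by simp
  rw [mul_min_of_nonneg _ _ (hA.trans hC)]
  exact le_min (hlip.trans (mul_le_mul_of_nonneg_right hC (norm_nonneg _)))
    (norm_image_sub_le_rpow hf hA hp hp1 hbound q x)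

end

theorem norm_gradient_sub_gradient {F : Type*} [NormedAddCommGroup F] [InnerProductSpace ℝ F]
    [CompleteSpace F] (g : F → ℝ) (q x : F) :
    ‖gradient g q - gradient g x‖ = ‖fderiv ℝ g q - fderiv ℝ g x‖ := by
  rw [gradient, gradient, ← map_sub, LinearIsometryEquiv.norm_map]

/-- under A2(m)(i), the gradient of `U` is both Lipschitz and
`(m−1)`-Hölder. -/
theorem gradient_lipschitz_and_holder {d : ℕ}
    (U : EuclideanSpace ℝ (Fin d) → ℝ) (m : ℝ) (hm : m ∈ Set.Ioc (1 : ℝ) 2)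
    (hU : ContDiff ℝ 3 U)
    (A₁ : ℝ) (hA₁ : 0 ≤ A₁)
    (hD : ∀ q : EuclideanSpace ℝ (Fin d),
      ‖iteratedFDeriv ℝ 2 U q‖ ≤ A₁ * (1 + ‖q‖) ^ (m - 2) ∧
      ‖iteratedFDeriv ℝ 3 U q‖ ≤ A₁ * (1 + ‖q‖) ^ (m - 3)) :
    ∃ C ≥ (0 : ℝ), ∀ q x : EuclideanSpace ℝ (Fin d),
      ‖gradient U q - gradient U x‖ ≤ C * min ‖q - x‖ (‖q - x‖ ^ (m - 1)) := by
  have hp : 0 < m - 1 := sub_pos.2 hm.1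
  have hDU : Differentiable ℝ (fderiv ℝ U) :=
    (hU.fderiv_right (m := 1) (by norm_num)).differentiable one_ne_zero
  have hbound : ∀ y, ‖fderiv ℝ (fderiv ℝ U) y‖ ≤ A₁ * (1 + ‖y‖) ^ (m - 1 - 1) := fun y => by
    rw [← norm_iteratedFDeriv_one, norm_iteratedFDeriv_fderiv, show m - 1 - 1 = m - 2 by ring]
    exact (hD y).1
  refine ⟨A₁ * (1 + 4 / (m - 1)), by positivity, fun q x => ?_⟩
  rw [norm_gradient_sub_gradient]
  exact norm_image_sub_le_mul_min hDU hA₁ hp (by linarith [hm.2]) hbound q x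
end

section
/- Let 𝒰 ⊆ ℝ^d be open, Θ : 𝒰 → ℝ^d Lipschitz with Lipschitz constant L = ‖Θ‖_Lip, and suppose there exist y₀, ỹ₀ ∈ ℝ^d and M, M̃ > 0 with B(ỹ₀,M̃) ⊆ 𝒰 and B(y₀,M) ⊆ Θ(B(ỹ₀,M̃)). Define the finite measure λ_Θ on the Borel sets of ℝ^d by λ_Θ(A) = Leb(Θ^{−1}(A) ∩ B(ỹ₀,M̃)), and let λ_Θ = λ_Θ^{(a)} + λ_Θ^{(s)} be its Lebesgue decomposition with respect to Lebesgue measure, with λ_Θ^{(a)} absolutely continuous and λ_Θ^{(s)} singular. Then any version φ_Θ of the density of λ_Θ^{(a)} with respect to Lebesgue measure satisfies φ_Θ(y) ≥ L^{−d} for Lebesgue-almost every y ∈ B(y₀,M). -/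
/-!
Every `A ⊆ B(y₀,M)` is the `Θ`-image of `Θ⁻¹(A) ∩ B(ỹ₀,M̃)`, so the Lipschitz bound for Hausdorff
measure gives `Leb(A) ≤ L^d λ_Θ(A)`. The singular part `λ_Θ^{(s)}` lives on a Lebesgue-null set,
so off that set this lower bound on `λ_Θ` is a lower bound on `λ_Θ^{(a)}`, hence on its density.
-/

open MeasureTheory Module
open scoped ENNReal NNReal

section LipschitzImage

variable {E : Type*} [NormedAddCommGroup E] [NormedSpace ℝ E] [FiniteDimensional ℝ E]
  [MeasurableSpace E] [BorelSpace E] (μ : Measure E) [μ.IsAddHaarMeasure] {f : E → E} {K : ℝ≥0}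
  {s : Set E}

/-- Every additive Haar measure is a constant multiple of the Hausdorff measure of dimension
`finrank ℝ E`, for which the Lipschitz image bound is classical. -/
theorem LipschitzOnWith.addHaar_image_le (hf : LipschitzOnWith K f s) :
    μ (f '' s) ≤ (K : ℝ≥0∞) ^ finrank ℝ E * μ s := by
  rw [Measure.isAddLeftInvariant_eq_smul μ μH[finrank ℝ E]]
  simp only [Measure.smul_apply, smul_eq_mul, ENNReal.smul_def]
  calc _ ≤ _ * ((K : ℝ≥0∞) ^ (finrank ℝ E : ℝ) * μH[finrank ℝ E] s) :=
        mul_le_mul_right (hf.hausdorffMeasure_image_le (Nat.cast_nonneg _)) _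
    _ = _ := by rw [ENNReal.rpow_natCast]; ring

theorem LipschitzOnWith.addHaar_le_mul_preimage_inter {A : Set E} (hf : LipschitzOnWith K f s)
    (hA : A ⊆ f '' s) :
    μ A ≤ (K : ℝ≥0∞) ^ finrank ℝ E * μ (f ⁻¹' A ∩ s) := by
  calc μ A = μ (f '' (f ⁻¹' A ∩ s)) := by rw [Set.image_preimage_inter, Set.inter_eq_left.2 hA]
    _ ≤ _ := (hf.mono Set.inter_subset_right).addHaar_image_le μ

end LipschitzImage

theorem ae_le_of_mul_le_withDensity_add_of_mutuallySingular {α : Type*} [MeasurableSpace α]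
    {μ ν : Measure α} [SigmaFinite μ] {φ : α → ℝ≥0∞} {U : Set α} {c : ℝ≥0∞}
    (hU : MeasurableSet U) (hν : ν ⟂ₘ μ)
    (h : ∀ A, MeasurableSet A → A ⊆ U → c * μ A ≤ μ.withDensity φ A + ν A) :
    ∀ᵐ y ∂μ, y ∈ U → c ≤ φ y := by
  obtain ⟨T, hT, hνT, hμT⟩ := hν
  have hUT : MeasurableSet (U ∩ T) := hU.inter hT
  have hle : (fun _ ↦ c) ≤ᵐ[μ.restrict (U ∩ T)] φ := by
    refine ae_le_of_forall_setLIntegral_le_of_sigmaFinite measurable_const fun s hs _ ↦ ?_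
    rw [Measure.restrict_restrict hs, setLIntegral_const, ← withDensity_apply _ (hs.inter hUT)]
    calc c * μ (s ∩ (U ∩ T))
        ≤ μ.withDensity φ (s ∩ (U ∩ T)) + ν (s ∩ (U ∩ T)) :=
          h _ (hs.inter hUT) fun _ hx ↦ hx.2.1
      _ = μ.withDensity φ (s ∩ (U ∩ T)) := by
          rw [measure_mono_null (fun _ hx ↦ hx.2.2) hνT, add_zero]
  have hT_ae : ∀ᵐ y ∂μ, y ∈ T := ae_iff.2 hμT
  filter_upwards [(ae_restrict_iff' hUT).1 hle, hT_ae] with y hy hyT hyU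
  exact hy ⟨hyU, hyT⟩

theorem pushforward_density_lower_bound_general {d : ℕ}
    (𝒰 : Set (EuclideanSpace ℝ (Fin d)))
    (Θ : EuclideanSpace ℝ (Fin d) → EuclideanSpace ℝ (Fin d))
    (L : ℝ≥0) (hLip : LipschitzOnWith L Θ 𝒰)
    (y₀ ytil₀ : EuclideanSpace ℝ (Fin d)) (M Mt : ℝ)
    (hball : Metric.ball ytil₀ Mt ⊆ 𝒰)
    (hcover : Metric.ball y₀ M ⊆ Θ '' Metric.ball ytil₀ Mt)
    (φ : EuclideanSpace ℝ (Fin d) → ENNReal)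
    (ν : Measure (EuclideanSpace ℝ (Fin d))) (hsing : ν ⟂ₘ volume)
    (hdecomp : ∀ A : Set (EuclideanSpace ℝ (Fin d)), MeasurableSet A →
      volume.withDensity φ A + ν A = volume (Θ ⁻¹' A ∩ Metric.ball ytil₀ Mt)) :
    ∀ᵐ y ∂(volume : Measure (EuclideanSpace ℝ (Fin d))),
      y ∈ Metric.ball y₀ M → ((L : ENNReal) ^ d)⁻¹ ≤ φ y := by
  refine ae_le_of_mul_le_withDensity_add_of_mutuallySingular measurableSet_ball hsing
    fun A hA hAU ↦ ?_
  have key := (hLip.mono hball).addHaar_le_mul_preimage_inter volume (hAU.trans hcover)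
  rw [finrank_euclideanSpace_fin] at key
  rw [hdecomp A hA, ← ENNReal.div_eq_inv_mul]
  exact ENNReal.div_le_of_le_mul' key

/-- if `Θ` is `L`-Lipschitz on an open set containing `B(ỹ₀,M̃)` and the
image `Θ(B(ỹ₀,M̃))` covers `B(y₀,M)`, then any density of the absolutely continuous part
(in the Lebesgue decomposition) of the measure `A ↦ Leb(Θ⁻¹(A) ∩ B(ỹ₀,M̃))` is bounded
below by `L^{-d}` almost everywhere on `B(y₀,M)`. -/
theorem pushforward_density_lower_bound {d : ℕ}
    (𝒰 : Set (EuclideanSpace ℝ (Fin d))) (h𝒰 : IsOpen 𝒰)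
    (Θ : EuclideanSpace ℝ (Fin d) → EuclideanSpace ℝ (Fin d))
    (L : ℝ≥0) (hLip : LipschitzOnWith L Θ 𝒰)
    (y₀ ytil₀ : EuclideanSpace ℝ (Fin d)) (M Mt : ℝ) (hM : 0 < M) (hMt : 0 < Mt)
    (hball : Metric.ball ytil₀ Mt ⊆ 𝒰)
    (hcover : Metric.ball y₀ M ⊆ Θ '' Metric.ball ytil₀ Mt)
    (φ : EuclideanSpace ℝ (Fin d) → ENNReal) (hφ : Measurable φ)
    (ν : Measure (EuclideanSpace ℝ (Fin d))) (hsing : ν ⟂ₘ volume)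
    (hdecomp : ∀ A : Set (EuclideanSpace ℝ (Fin d)), MeasurableSet A →
      volume.withDensity φ A + ν A = volume (Θ ⁻¹' A ∩ Metric.ball ytil₀ Mt)) :
    ∀ᵐ y ∂(volume : Measure (EuclideanSpace ℝ (Fin d))),
      y ∈ Metric.ball y₀ M → ((L : ENNReal) ^ d)⁻¹ ≤ φ y :=
  pushforward_density_lower_bound_general 𝒰 Θ L hLip y₀ ytil₀ M Mt hball hcover φ ν hsing hdecomp
end
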